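/- arXiv:2508.15022 — 2 statements merged into one kernel-verified Lean document; each statement's English description precedes it below -/
import Mathlib

section
/- Let p: Q̃ → Q be a weakly admissible quiver covering such that π(Q)² ⊆ p_*(π(Q̃)), where π(Q)² is the normal subgroupoid of the free groupoid π(Q) generated by the squares of all cyclic walks. Then p is globally weakly admissible. Consequently, for any reduced homotopy H on a loop-free quiver Q with π(Q)² ⊆ H, the regular covering p_H: Q_H → Q corresponding to H under the Galois correspondence is globally weakly admissible. -/
namespace CMu

/-- A (locally small) quiver with vertex type `V`: a type of arrows together with
source and target maps.  All quivers in a given statement share the vertex type. -/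
structure Quiv (V : Type) where
  Arrow : Type
  src : Arrow → V
  tgt : Arrow → V

variable {V : Type}

namespace Quiv

/-- A quiver is loop-free if no arrow has equal source and target. -/
def LoopFree (Q : Quiv V) : Prop := ∀ a : Q.Arrow, Q.src a ≠ Q.tgt a

/-- A quiver is `2`-acyclic if it contains no oriented `2`-cycle, i.e. there is no pair of
arrows `a, b` with `t a = s b` and `t b = s a` (a loop forms a `2`-cycle with itself). -/
def TwoAcyclic (Q : Quiv V) : Prop :=
  ∀ a b : Q.Arrow, Q.tgt a = Q.src b → Q.tgt b = Q.src a → False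

/-- A quiver is locally finite if each vertex is the source (resp. target) of only
finitely many arrows. -/
def LocallyFinite (Q : Quiv V) : Prop :=
  ∀ v : V, {a : Q.Arrow | Q.src a = v}.Finite ∧ {a : Q.Arrow | Q.tgt a = v}.Finite

/-- The number of arrows from `i` to `j`. -/
noncomputable def nArrows (Q : Quiv V) (i j : V) : ℕ :=
  Nat.card {a : Q.Arrow // Q.src a = i ∧ Q.tgt a = j}

end Quiv

/-- A step of a walk in the underlying graph of a quiver: an arrow traversed forwards,
or an arrow traversed backwards (its formal inverse). -/
inductive Step (Q : Quiv V) : V → V → Type where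
  | fwd (a : Q.Arrow) : Step Q (Q.src a) (Q.tgt a)
  | bwd (a : Q.Arrow) : Step Q (Q.tgt a) (Q.src a)

/-- The inverse of a step. -/
def Step.inv {Q : Quiv V} : {x y : V} → Step Q x y → Step Q y x
  | _, _, .fwd a => .bwd a
  | _, _, .bwd a => .fwd a

/-- A step is forward if it traverses an arrow in its own direction. -/
def Step.IsFwd {Q : Quiv V} : {x y : V} → Step Q x y → Prop
  | _, _, .fwd _ => True
  | _, _, .bwd _ => False

/-- A walk in (the underlying graph of) a quiver `Q` from `x` to `y`:
a word in the arrows of `Q` and their formal inverses. -/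
inductive Walk (Q : Quiv V) : V → V → Type where
  | nil (v : V) : Walk Q v v
  | cons {x y z : V} (e : Step Q x y) (w : Walk Q y z) : Walk Q x z

namespace Walk

/-- Composition (concatenation) of walks. -/
def comp {Q : Quiv V} : {x y z : V} → Walk Q x y → Walk Q y z → Walk Q x z
  | _, _, _, .nil _, w => w
  | _, _, _, .cons e u, w => .cons e (comp u w)

/-- The walk consisting of a single step. -/
def single {Q : Quiv V} {x y : V} (e : Step Q x y) : Walk Q x y := .cons e (.nil _)

/-- The inverse (reversal) of a walk. -/
def inv {Q : Quiv V} : {x y : V} → Walk Q x y → Walk Q y x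
  | _, _, .nil v => .nil v
  | _, _, .cons e u => (inv u).comp (single e.inv)

/-- Transport a walk along equalities of its endpoints. -/
def cast {Q : Quiv V} {x y x' y' : V} (hx : x = x') (hy : y = y') (w : Walk Q x y) :
    Walk Q x' y' := by subst hx; subst hy; exact w

/-- A walk is a (directed) path if all of its steps are forward. -/
def AllFwd {Q : Quiv V} : {x y : V} → Walk Q x y → Prop
  | _, _, .nil _ => True
  | _, _, .cons e w => e.IsFwd ∧ AllFwd w

end Walk

/-- A quiver is acyclic if it contains no (nontrivial) oriented cycle. -/
def Quiv.Acyclic (Q : Quiv V) : Prop :=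
  ∀ (v : V) (w : Walk Q v v), w.AllFwd → w = .nil v

/-- A quiver is connected if any two vertices are joined by a walk. -/
def Quiv.Connected (Q : Quiv V) : Prop := ∀ x y : V, Nonempty (Walk Q x y)

/-- Free homotopy of walks: the equivalence relation on walks generated by cancelling
`e ⬝ e⁻¹`.  Two walks are homotopic iff they have the same reduction, so that the morphisms
of the free groupoid `π(Q)` from `x` to `y` are the homotopy classes of walks from `x` to `y`. -/
inductive WalkHtpy (Q : Quiv V) : {x y : V} → Walk Q x y → Walk Q x y → Prop
  | refl {x y : V} (w : Walk Q x y) : WalkHtpy Q w w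
  | symm {x y : V} {w u : Walk Q x y} : WalkHtpy Q w u → WalkHtpy Q u w
  | trans {x y : V} {w u t : Walk Q x y} : WalkHtpy Q w u → WalkHtpy Q u t → WalkHtpy Q w t
  | cancel {x y z : V} (e : Step Q x y) (w : Walk Q x z) :
      WalkHtpy Q (.cons e (.cons e.inv w)) w
  | congr {x y z : V} (e : Step Q x y) {w u : Walk Q y z} :
      WalkHtpy Q w u → WalkHtpy Q (.cons e w) (.cons e u)

/-- A family of sets of cyclic walks, one at each vertex.  Such a family, when it satisfies
`IsHomotopy`, encodes a normal subgroupoid (a *homotopy*) `H` of the free groupoid `π(Q)`: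
`H(v,v)` is the set of homotopy classes of the walks in the family at `v`. -/
def HSet (Q : Quiv V) := ∀ v : V, Set (Walk Q v v)

/-- `H` is a homotopy on `Q` (a normal subgroupoid of the free groupoid `π(Q)`):
each `H v` is closed under free homotopy of walks, contains the identity, is closed under
composition and inverse (so it determines a subgroup of `π₁(Q,v) = π(Q)(v,v)`), and the family
is closed under conjugation by arbitrary walks. -/
structure IsHomotopy (Q : Quiv V) (H : HSet Q) : Prop where
  htpy_mem : ∀ {v : V} {w u : Walk Q v v}, WalkHtpy Q w u → w ∈ H v → u ∈ H v
  nil_mem : ∀ v : V, Walk.nil v ∈ H v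
  comp_mem : ∀ {v : V} {w u : Walk Q v v}, w ∈ H v → u ∈ H v → w.comp u ∈ H v
  inv_mem : ∀ {v : V} {w : Walk Q v v}, w ∈ H v → w.inv ∈ H v
  conj_mem : ∀ {x y : V} (g : Walk Q x y) {w : Walk Q x x},
    w ∈ H x → (g.inv.comp (w.comp g)) ∈ H y

/-- The oriented `2`-cycle determined by arrows `a : i → j` and `b : j → i`, as a cyclic
walk based at `i = s a`. -/
def twoCycle {Q : Quiv V} (a b : Q.Arrow) (h : Q.tgt a = Q.src b) (h' : Q.tgt b = Q.src a) :
    Walk Q (Q.src a) (Q.src a) :=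
  Walk.cons (.fwd a) ((Walk.single (.fwd b)).cast h.symm h')

/-- A homotopy is reduced if it contains no oriented `2`-cycle of `Q`. -/
def IsReducedH (Q : Quiv V) (H : HSet Q) : Prop :=
  ∀ (a b : Q.Arrow) (h : Q.tgt a = Q.src b) (h' : Q.tgt b = Q.src a),
    twoCycle a b h h' ∉ H (Q.src a)

/-- Two walks `w, u : x → y` represent the same morphism of the quotient groupoid
`π(Q)/H` iff `w⁻¹ u ∈ H`. -/
def HEquiv {Q : Quiv V} (H : HSet Q) {x y : V} (w u : Walk Q x y) : Prop :=
  w.inv.comp u ∈ H y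

/-- The trivial homotopy `𝟙`: only the identity morphisms, i.e. only walks homotopic
to the constant walk. -/
def trivH (Q : Quiv V) : HSet Q := fun v => {w | WalkHtpy Q w (.nil v)}

/-- The maximal homotopy `π(Q)`: all cyclic walks. -/
def maxH (Q : Quiv V) : HSet Q := fun _ => Set.univ

/-- The normal subgroupoid (homotopy) generated by a family `S` of cyclic walks. -/
def genH (Q : Quiv V) (S : HSet Q) : HSet Q := fun v =>
  {w | ∀ K : HSet Q, IsHomotopy Q K → (∀ x, S x ⊆ K x) → w ∈ K v}

/-- The squares of all cyclic walks; `genH Q (sqGens Q)` is the normal subgroupoid `π(Q)²`. -/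
def sqGens (Q : Quiv V) : HSet Q := fun v => {w | ∃ u : Walk Q v v, w = u.comp u}

/-- A morphism from the free groupoid on `Q` to the free groupoid on `R` (both over the same
vertex type, fixing all vertices), given by a choice of a walk in `R` for every arrow of `Q`. -/
structure QMap (Q R : Quiv V) where
  toWalk : (a : Q.Arrow) → Walk R (Q.src a) (Q.tgt a)

namespace QMap

/-- The image of a step. -/
def mapStep {Q R : Quiv V} (F : QMap Q R) : {x y : V} → Step Q x y → Walk R x y
  | _, _, .fwd a => F.toWalk a
  | _, _, .bwd a => (F.toWalk a).inv

/-- The induced map on walks. -/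
def mapWalk {Q R : Quiv V} (F : QMap Q R) : {x y : V} → Walk Q x y → Walk R x y
  | _, _, .nil v => .nil v
  | _, _, .cons e w => (F.mapStep e).comp (F.mapWalk w)

/-- Composition of `QMap`s. -/
def comp {Q R S : Quiv V} (F : QMap Q R) (G : QMap R S) : QMap Q S :=
  ⟨fun a => G.mapWalk (F.toWalk a)⟩

end QMap

/-- The kernel, relative to a homotopy `H` on `R`, of the functor `π(Q) → π(R)/H`
induced by a `QMap`: all cyclic walks whose image lies in `H`. -/
def kerH {Q R : Quiv V} (F : QMap Q R) (H : HSet R) : HSet Q :=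
  fun v => {w | F.mapWalk w ∈ H v}

/-- A (vertex-fixing) isomorphism of quivers over the same vertex type. -/
structure QIso (Q R : Quiv V) where
  arr : Q.Arrow ≃ R.Arrow
  src_eq : ∀ a, R.src (arr a) = Q.src a
  tgt_eq : ∀ a, R.tgt (arr a) = Q.tgt a

/-- The `QMap` underlying a quiver isomorphism. -/
def QIso.toQMap {Q R : Quiv V} (f : QIso Q R) : QMap Q R :=
  ⟨fun a => (Walk.single (.fwd (f.arr a))).cast (f.src_eq a) (f.tgt_eq a)⟩

/-- The pre-mutation `μ̃_k(Q)` of a loop-free quiver `Q` at the vertex `k`: arrows of `Q` not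
incident to `k` are kept, arrows incident to `k` are replaced by reversed arrows `γ*`, and
for every pair of arrows `α, β` with `s α = t β = k` and `s β ≠ t α` a new composite arrow
`[αβ] : s β → t α` is added. -/
def preMut (Q : Quiv V) (k : V) : Quiv V where
  Arrow := {a : Q.Arrow // Q.src a ≠ k ∧ Q.tgt a ≠ k} ⊕
    ({a : Q.Arrow // Q.src a = k ∨ Q.tgt a = k} ⊕
     {p : Q.Arrow × Q.Arrow // Q.src p.1 = k ∧ Q.tgt p.2 = k ∧ Q.src p.2 ≠ Q.tgt p.1})
  src x := match x with
    | .inl a => Q.src a.1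
    | .inr (.inl a) => Q.tgt a.1
    | .inr (.inr p) => Q.src p.1.2
  tgt x := match x with
    | .inl a => Q.tgt a.1
    | .inr (.inl a) => Q.src a.1
    | .inr (.inr p) => Q.tgt p.1.1

/-- The canonical functor `φ : π(μ̃_k Q) → π(Q)` (to be composed with `π(Q) → π(Q)/H`):
it fixes all vertices, sends a kept arrow `γ` to `γ`, a reversed arrow `γ*` to `γ⁻¹`, and a
composite arrow `[αβ]` to the walk `αβ`. -/
def phiQMap (Q : Quiv V) (k : V) : QMap (preMut Q k) Q where
  toWalk x := match x with
    | .inl a => Walk.single (.fwd a.1)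
    | .inr (.inl a) => Walk.single (.bwd a.1)
    | .inr (.inr p) => Walk.cons (.fwd p.1.2)
        ((Walk.single (.fwd p.1.1)).cast (p.2.1.trans p.2.2.1.symm) rfl)

/-- The homotopy `H' = ker (φ : π(μ̃_k Q) → π(Q)/H)` of the pre-mutation `μ̃_k(Q,H) = (Q',H')`. -/
def preH (Q : Quiv V) (H : HSet Q) (k : V) : HSet (preMut Q k) := kerH (phiQMap Q k) H

/-- The subquiver of `R` obtained by deleting the arrows in `S`. -/
def restrictQ (R : Quiv V) (S : Set R.Arrow) : Quiv V where
  Arrow := {a : R.Arrow // a ∉ S}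
  src a := R.src a.1
  tgt a := R.tgt a.1

/-- The inclusion `QMap` of a subquiver. -/
def inclQMap (R : Quiv V) (S : Set R.Arrow) : QMap (restrictQ R S) R :=
  ⟨fun a => Walk.single (.fwd a.1)⟩

/-- A deletion of `2`-cycles lying in a homotopy `H` on a quiver `R`, away from the
vertex `k`: a collection of pairwise disjoint pairs of opposite arrows `(γ, δ)` between two
distinct vertices `i ≠ j`, both different from `k`, such that each composite `2`-cycle `γδ`
lies in `H`. -/
structure TwoCycleDeletion (R : Quiv V) (H : HSet R) (k : V) where
  pairs : Set (R.Arrow × R.Arrow)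
  endpoints : ∀ q ∈ pairs, R.tgt q.1 = R.src q.2 ∧ R.tgt q.2 = R.src q.1
  src_ne_k : ∀ q ∈ pairs, R.src q.1 ≠ k
  tgt_ne_k : ∀ q ∈ pairs, R.tgt q.1 ≠ k
  src_ne_tgt : ∀ q ∈ pairs, R.src q.1 ≠ R.tgt q.1
  mem_H : ∀ q ∈ pairs, ∀ (h : R.tgt q.1 = R.src q.2) (h' : R.tgt q.2 = R.src q.1),
    twoCycle q.1 q.2 h h' ∈ H (R.src q.1)
  disjoint : ∀ q ∈ pairs, ∀ q' ∈ pairs, q ≠ q' →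
    q.1 ≠ q'.1 ∧ q.1 ≠ q'.2 ∧ q.2 ≠ q'.1 ∧ q.2 ≠ q'.2

namespace TwoCycleDeletion

variable {R : Quiv V} {H : HSet R} {k : V}

/-- The set of deleted arrows. -/
def deleted (D : TwoCycleDeletion R H k) : Set R.Arrow :=
  {a | ∃ q ∈ D.pairs, a = q.1 ∨ a = q.2}

/-- A deletion is maximal if no `2`-cycle lying in `H` (between two distinct vertices, both
different from `k`) survives it.  This is the result of the iterative deletion procedure. -/
def Maximal (D : TwoCycleDeletion R H k) : Prop :=
  ∀ γ δ : R.Arrow, γ ∉ D.deleted → δ ∉ D.deleted →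
    R.src γ ≠ k → R.tgt γ ≠ k → R.src γ ≠ R.tgt γ →
    ∀ (h : R.tgt γ = R.src δ) (h' : R.tgt δ = R.src γ),
      twoCycle γ δ h h' ∉ H (R.src γ)

end TwoCycleDeletion

/-- The quiver `Q†` of the mutation `μ_k(Q,H) = (Q†,H†)` determined by a choice `D` of
deleted `2`-cycles. -/
def mutQuiv (Q : Quiv V) (H : HSet Q) (k : V)
    (D : TwoCycleDeletion (preMut Q k) (preH Q H k) k) : Quiv V :=
  restrictQ (preMut Q k) D.deleted

/-- The homotopy `H† = ker (ψ : π(Q†) → π(Q')/H')` of the mutation `μ_k(Q,H) = (Q†,H†)`,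
where `ψ` is induced by the inclusion `Q† ⊆ Q'`. -/
def mutH (Q : Quiv V) (H : HSet Q) (k : V)
    (D : TwoCycleDeletion (preMut Q k) (preH Q H k) k) : HSet (mutQuiv Q H k D) :=
  kerH (inclQMap (preMut Q k) D.deleted) (preH Q H k)

/-- `(R, K)` is (isomorphic, by a vertex-fixing isomorphism matching the homotopies, to)
the mutation `μ_k(Q, H)` of the quiver with homotopy `(Q, H)` in direction `k`. -/
def IsMutationStep (Q : Quiv V) (H : HSet Q) (k : V) (R : Quiv V) (K : HSet R) : Prop :=
  ∃ D : TwoCycleDeletion (preMut Q k) (preH Q H k) k, D.Maximal ∧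
    ∃ f : QIso (mutQuiv Q H k D) R,
      ∀ (v : V) (w : Walk (mutQuiv Q H k D) v v),
        w ∈ mutH Q H k D v ↔ f.toQMap.mapWalk w ∈ K v

/-- A `QMap` `F : π(Q) → π(R)` induces an isomorphism of quotient groupoids
`π(Q)/H_Q ≅ π(R)/H_R` (it is the identity on objects, well defined, full and faithful
on all morphism sets). -/
structure InducesQuotIso {Q R : Quiv V} (F : QMap Q R) (HQ : HSet Q) (HR : HSet R) : Prop where
  maps : ∀ {x y : V} (w u : Walk Q x y), HEquiv HQ w u → HEquiv HR (F.mapWalk w) (F.mapWalk u)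
  full : ∀ {x y : V} (w : Walk R x y), ∃ u : Walk Q x y, HEquiv HR (F.mapWalk u) w
  faithful : ∀ {x y : V} (w u : Walk Q x y),
    HEquiv HR (F.mapWalk w) (F.mapWalk u) → HEquiv HQ w u

/-- A deletion datum for the Fomin–Zelevinsky mutation: a collection of pairwise disjoint
pairs of opposite arrows (oriented `2`-cycles). -/
structure FZDeletion (R : Quiv V) where
  pairs : Set (R.Arrow × R.Arrow)
  endpoints : ∀ q ∈ pairs, R.tgt q.1 = R.src q.2 ∧ R.tgt q.2 = R.src q.1
  disjoint : ∀ q ∈ pairs, ∀ q' ∈ pairs, q ≠ q' →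
    q.1 ≠ q'.1 ∧ q.1 ≠ q'.2 ∧ q.2 ≠ q'.1 ∧ q.2 ≠ q'.2

/-- The arrows deleted by an `FZDeletion`. -/
def FZDeletion.deleted {R : Quiv V} (D : FZDeletion R) : Set R.Arrow :=
  {a | ∃ q ∈ D.pairs, a = q.1 ∨ a = q.2}

/-- `R` is (a representative of) the Fomin–Zelevinsky mutation `μ^FZ_k(Q)` of the `2`-acyclic
quiver `Q`: it is obtained from the pre-mutation of `Q` at `k` by deleting a maximal collection
of oriented `2`-cycles (so that the result is `2`-acyclic), up to vertex-fixing isomorphism. -/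
def IsFZMut (Q : Quiv V) (k : V) (R : Quiv V) : Prop :=
  ∃ D : FZDeletion (preMut Q k),
    (restrictQ (preMut Q k) D.deleted).TwoAcyclic ∧
    Nonempty (QIso (restrictQ (preMut Q k) D.deleted) R)

/-- Two homotopies `H, H'` on `Q` are equivalent if, for every mutation sequence, the
underlying quivers of the corresponding mutated quivers with homotopies are isomorphic by
vertex-fixing isomorphisms. -/
def HomotopyEquivalent (Q : Quiv V) (H H' : HSet Q) : Prop :=
  ∀ (ℓ : ℕ) (ks : ℕ → V)
    (Qs : ℕ → Quiv V) (Hs : ∀ i, HSet (Qs i))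
    (Qs' : ℕ → Quiv V) (Hs' : ∀ i, HSet (Qs' i)),
    Qs 0 = Q → HEq (Hs 0) H → Qs' 0 = Q → HEq (Hs' 0) H' →
    (∀ i < ℓ, IsMutationStep (Qs i) (Hs i) (ks i) (Qs (i + 1)) (Hs (i + 1))) →
    (∀ i < ℓ, IsMutationStep (Qs' i) (Hs' i) (ks i) (Qs' (i + 1)) (Hs' (i + 1))) →
    Nonempty (QIso (Qs ℓ) (Qs' ℓ))

/-- The relation on vertices generated by the arrows (connectivity). -/
def adjRel (Q : Quiv V) : V → V → Prop := fun x y =>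
  ∃ a : Q.Arrow, (Q.src a = x ∧ Q.tgt a = y) ∨ (Q.src a = y ∧ Q.tgt a = x)

/-- The number of connected components of the underlying graph. -/
noncomputable def componentCount (Q : Quiv V) : ℕ := Nat.card (Quot (adjRel Q))

/-- The rank of the fundamental group of (the underlying graph of) a finite quiver:
`|Q₁| - |Q₀| + (number of connected components)`. -/
noncomputable def fundGroupRank (Q : Quiv V) : ℤ :=
  (Nat.card Q.Arrow : ℤ) - (Nat.card V : ℤ) + (componentCount Q : ℤ)

end CMu

namespace CMu

variable {V W : Type}

/-- A morphism of quivers (over possibly different vertex types). -/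
structure QuivHom (Q : Quiv V) (R : Quiv W) where
  onV : V → W
  onA : Q.Arrow → R.Arrow
  src_eq : ∀ a, R.src (onA a) = onV (Q.src a)
  tgt_eq : ∀ a, R.tgt (onA a) = onV (Q.tgt a)

namespace QuivHom

/-- The image of a step under a morphism of quivers. -/
def mapStep {Q : Quiv V} {R : Quiv W} (p : QuivHom Q R) :
    {x y : V} → Step Q x y → Walk R (p.onV x) (p.onV y)
  | _, _, .fwd a => (Walk.single (.fwd (p.onA a))).cast (p.src_eq a) (p.tgt_eq a)
  | _, _, .bwd a => (Walk.single (.bwd (p.onA a))).cast (p.tgt_eq a) (p.src_eq a)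

/-- The image of a walk under a morphism of quivers. -/
def mapWalk {Q : Quiv V} {R : Quiv W} (p : QuivHom Q R) :
    {x y : V} → Walk Q x y → Walk R (p.onV x) (p.onV y)
  | _, _, .nil v => .nil (p.onV v)
  | _, _, .cons e w => (p.mapStep e).comp (p.mapWalk w)

end QuivHom

/-- A covering of quivers: a morphism of quivers which is surjective on vertices and
restricts to bijections between the sets of arrows ending (resp. starting) at any vertex `v`
of the total quiver and the arrows ending (resp. starting) at its image. -/
def IsCovering {Q : Quiv V} {R : Quiv W} (p : QuivHom Q R) : Prop :=
  Function.Surjective p.onV ∧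
  (∀ a b : Q.Arrow, Q.tgt a = Q.tgt b → p.onA a = p.onA b → a = b) ∧
  (∀ (v : V) (b : R.Arrow), R.tgt b = p.onV v → ∃ a : Q.Arrow, Q.tgt a = v ∧ p.onA a = b) ∧
  (∀ a b : Q.Arrow, Q.src a = Q.src b → p.onA a = p.onA b → a = b) ∧
  (∀ (v : V) (b : R.Arrow), R.src b = p.onV v → ∃ a : Q.Arrow, Q.src a = v ∧ p.onA a = b)

/-- An automorphism of a quiver. -/
structure QuivAut (Q : Quiv V) where
  vMap : V ≃ V
  aMap : Q.Arrow ≃ Q.Arrow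
  src_eq : ∀ a, Q.src (aMap a) = vMap (Q.src a)
  tgt_eq : ∀ a, Q.tgt (aMap a) = vMap (Q.tgt a)

/-- A deck transformation of `p`: an automorphism of the total quiver commuting with `p`. -/
def IsDeck {Q : Quiv V} {R : Quiv W} (p : QuivHom Q R) (τ : QuivAut Q) : Prop :=
  (∀ v, p.onV (τ.vMap v) = p.onV v) ∧ (∀ a, p.onA (τ.aMap a) = p.onA a)

/-- A covering is regular (normal) if its deck transformation group acts transitively on
every fiber. -/
def RegularCov {Q : Quiv V} {R : Quiv W} (p : QuivHom Q R) : Prop :=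
  ∀ x y : V, p.onV x = p.onV y → ∃ τ : QuivAut Q, IsDeck p τ ∧ τ.vMap x = y

/-- A (normal) covering `p : Q̃ → Q` is weakly admissible if `Q̃` is `2`-acyclic and `Q` is
loop-free. -/
def WeaklyAdmissible {Qt : Quiv V} {Qb : Quiv W} (p : QuivHom Qt Qb) : Prop :=
  IsCovering p ∧ RegularCov p ∧ Qt.TwoAcyclic ∧ Qb.LoopFree

/-- The orbit pre-mutation of a quiver `Q` at a set `S` of vertices (for `S = p⁻¹(k)` this is
`μ̃_[k](Q̃)`): all arrows incident to `S` are reversed, and for each pair of arrows `(α, β)`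
with `s α = t β ∈ S` a new arrow `[αβ] : s β → t α` is added. -/
def preMutS (Q : Quiv V) (S : Set V) : Quiv V where
  Arrow := {a : Q.Arrow // Q.src a ∉ S ∧ Q.tgt a ∉ S} ⊕
    ({a : Q.Arrow // Q.src a ∈ S ∨ Q.tgt a ∈ S} ⊕
     {p : Q.Arrow × Q.Arrow // Q.src p.1 ∈ S ∧ Q.tgt p.2 = Q.src p.1})
  src x := match x with
    | .inl a => Q.src a.1
    | .inr (.inl a) => Q.tgt a.1
    | .inr (.inr p) => Q.src p.1.2
  tgt x := match x with
    | .inl a => Q.tgt a.1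
    | .inr (.inl a) => Q.src a.1
    | .inr (.inr p) => Q.tgt p.1.1

/-- Forget the defining constraints of an arrow of the orbit pre-mutation: a kept arrow,
a reversed arrow, or a composite pair. -/
def rawA {Q : Quiv V} {S : Set V} :
    (preMutS Q S).Arrow → Q.Arrow ⊕ (Q.Arrow ⊕ Q.Arrow × Q.Arrow)
  | .inl a => .inl a.1
  | .inr (.inl a) => .inr (.inl a.1)
  | .inr (.inr p) => .inr (.inr p.1)

/-- Forget the defining constraints of an arrow of the pre-mutation `μ̃_k(Q)`. -/
def rawPM {Q : Quiv V} {k : V} :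
    (preMut Q k).Arrow → Q.Arrow ⊕ (Q.Arrow ⊕ Q.Arrow × Q.Arrow)
  | .inl a => .inl a.1
  | .inr (.inl a) => .inr (.inl a.1)
  | .inr (.inr p) => .inr (.inr p.1)

/-- The raw action of a map on arrows on the three kinds of arrows. -/
def rawMap {A B : Type} (f : A → B) :
    A ⊕ (A ⊕ A × A) → B ⊕ (B ⊕ B × B) :=
  Sum.map f (Sum.map f (Prod.map f f))

/-- An automorphism of `Q` preserving `S` extends canonically to an automorphism of the
orbit pre-mutation `preMutS Q S`. -/
def preMutSAut {Q : Quiv V} (S : Set V) (τ : QuivAut Q)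
    (hS : ∀ v, v ∈ S ↔ τ.vMap v ∈ S) : QuivAut (preMutS Q S) where
  vMap := τ.vMap
  aMap := Equiv.sumCongr
    (τ.aMap.subtypeEquiv (fun a => by
      rw [τ.src_eq, τ.tgt_eq, ← hS, ← hS]))
    (Equiv.sumCongr
      (τ.aMap.subtypeEquiv (fun a => by
        rw [τ.src_eq, τ.tgt_eq, ← hS, ← hS]))
      ((τ.aMap.prodCongr τ.aMap).subtypeEquiv (fun p => by
        simp only [Equiv.prodCongr_apply, Prod.map_fst, Prod.map_snd]
        rw [τ.src_eq, τ.tgt_eq, ← hS]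
        exact and_congr Iff.rfl ⟨fun h => by rw [h], fun h => τ.vMap.injective h⟩)))
  src_eq x := by
    rcases x with a | a | p <;>
      first
        | exact τ.src_eq _
        | exact τ.tgt_eq _
  tgt_eq x := by
    rcases x with a | a | p <;>
      first
        | exact τ.src_eq _
        | exact τ.tgt_eq _

/-- The canonical extension of a deck transformation of `p` to the orbit pre-mutation
`μ̃_[k](Q̃) = preMutS Q̃ (p⁻¹ k)`. -/
def deckAct {Qt : Quiv V} {Qb : Quiv W} (p : QuivHom Qt Qb) (k : W)
    (τ : QuivAut Qt) (hτ : IsDeck p τ) : QuivAut (preMutS Qt (p.onV ⁻¹' {k})) :=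
  preMutSAut _ τ (fun v => by
    simp only [Set.mem_preimage, Set.mem_singleton_iff, hτ.1 v])

/-- The set of arrows deleted by a collection of pairs of opposite arrows. -/
def orbDeleted {R : Quiv V} (pairs : Set (R.Arrow × R.Arrow)) : Set R.Arrow :=
  {a | ∃ q ∈ pairs, a = q.1 ∨ a = q.2}

/-- A valid `Γ`-equivariant maximal choice of `2`-cycles to delete from the orbit
pre-mutation `μ̃_[k](Q̃)` (as in the Lemma on removing `2`-cycles equivariantly):
each pair consists of opposite arrows between two distinct vertices not in `p⁻¹(k)`,
the pairs are pairwise disjoint, the collection is maximal, and it is stable under the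
extended action of every deck transformation. -/
def OrbDelValid {Qt : Quiv V} {Qb : Quiv W} (p : QuivHom Qt Qb) (k : W)
    (pairs : Set ((preMutS Qt (p.onV ⁻¹' {k})).Arrow × (preMutS Qt (p.onV ⁻¹' {k})).Arrow)) :
    Prop :=
  (∀ q ∈ pairs,
      (preMutS Qt (p.onV ⁻¹' {k})).tgt q.1 = (preMutS Qt (p.onV ⁻¹' {k})).src q.2 ∧
      (preMutS Qt (p.onV ⁻¹' {k})).tgt q.2 = (preMutS Qt (p.onV ⁻¹' {k})).src q.1 ∧
      (preMutS Qt (p.onV ⁻¹' {k})).src q.1 ∉ (p.onV ⁻¹' {k}) ∧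
      (preMutS Qt (p.onV ⁻¹' {k})).tgt q.1 ∉ (p.onV ⁻¹' {k}) ∧
      (preMutS Qt (p.onV ⁻¹' {k})).src q.1 ≠ (preMutS Qt (p.onV ⁻¹' {k})).tgt q.1) ∧
  (∀ q ∈ pairs, ∀ q' ∈ pairs, q ≠ q' →
      q.1 ≠ q'.1 ∧ q.1 ≠ q'.2 ∧ q.2 ≠ q'.1 ∧ q.2 ≠ q'.2) ∧
  (∀ γ δ : (preMutS Qt (p.onV ⁻¹' {k})).Arrow,
      γ ∉ orbDeleted pairs → δ ∉ orbDeleted pairs →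
      (preMutS Qt (p.onV ⁻¹' {k})).tgt γ = (preMutS Qt (p.onV ⁻¹' {k})).src δ →
      (preMutS Qt (p.onV ⁻¹' {k})).tgt δ = (preMutS Qt (p.onV ⁻¹' {k})).src γ →
      (preMutS Qt (p.onV ⁻¹' {k})).src γ ∉ (p.onV ⁻¹' {k}) →
      (preMutS Qt (p.onV ⁻¹' {k})).tgt γ ∉ (p.onV ⁻¹' {k}) →
      (preMutS Qt (p.onV ⁻¹' {k})).src γ ≠ (preMutS Qt (p.onV ⁻¹' {k})).tgt γ → False) ∧
  (∀ (τ : QuivAut Qt) (hτ : IsDeck p τ) (q : _ × _),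
      q ∈ pairs ↔ ((deckAct p k τ hτ).aMap q.1, (deckAct p k τ hτ).aMap q.2) ∈ pairs)

/-- The relation on vertices induced by a set of automorphisms. -/
def autRelV {Q : Quiv V} (G : Set (QuivAut Q)) : V → V → Prop :=
  fun x y => ∃ τ ∈ G, τ.vMap x = y

/-- The relation on arrows induced by a set of automorphisms. -/
def autRelA {Q : Quiv V} (G : Set (QuivAut Q)) : Q.Arrow → Q.Arrow → Prop :=
  fun a b => ∃ τ ∈ G, τ.aMap a = b

/-- The quotient quiver of a quiver by (the action of) a set of automorphisms: vertices and
arrows are the orbit classes. -/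
def quotQuiv (Q : Quiv V) (G : Set (QuivAut Q)) : Quiv (Quot (autRelV G)) where
  Arrow := Quot (autRelA G)
  src := Quot.lift (fun a => Quot.mk _ (Q.src a)) (by
    rintro a b ⟨τ, hτ, rfl⟩
    exact Quot.sound ⟨τ, hτ, (τ.src_eq a).symm⟩)
  tgt := Quot.lift (fun a => Quot.mk _ (Q.tgt a)) (by
    rintro a b ⟨τ, hτ, rfl⟩
    exact Quot.sound ⟨τ, hτ, (τ.tgt_eq a).symm⟩)

/-- The quotient morphism onto the quotient quiver. -/
def quotHom (Q : Quiv V) (G : Set (QuivAut Q)) : QuivHom Q (quotQuiv Q G) where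
  onV := Quot.mk _
  onA := Quot.mk _
  src_eq _ := rfl
  tgt_eq _ := rfl

/-- The homotopy `p_*(π(Q̃))` on the base of a covering `p : Q̃ → Q`: at each vertex `x`,
the cyclic walks homotopic to the image of a cyclic walk of `Q̃` based in the fiber of `x`.
For a regular covering this is the normal subgroupoid corresponding to `p` under the Galois
correspondence. -/
def coverH {Qt : Quiv V} {Qb : Quiv W} (p : QuivHom Qt Qb) : HSet Qb :=
  fun x => {w | ∃ (xt : V) (h : p.onV xt = x) (wt : Walk Qt xt xt),
    WalkHtpy Qb ((p.mapWalk wt).cast h h) w}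

/-- `G` is the set of automorphisms of the orbit mutation
`μ_[k](Q̃) = restrictQ (μ̃_[k] Q̃) (orbDeleted pairs)` obtained by restricting the extended
action of the deck transformations of `p`. -/
def GChar {Qt : Quiv V} {Qb : Quiv W} (p : QuivHom Qt Qb) (k : W)
    (pairs : Set ((preMutS Qt (p.onV ⁻¹' {k})).Arrow × (preMutS Qt (p.onV ⁻¹' {k})).Arrow))
    (G : Set (QuivAut (restrictQ (preMutS Qt (p.onV ⁻¹' {k})) (orbDeleted pairs)))) : Prop :=
  ∀ σ, σ ∈ G ↔ ∃ (τ : QuivAut Qt) (hτ : IsDeck p τ),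
    (∀ v, σ.vMap v = τ.vMap v) ∧
    ∀ a, (σ.aMap a).1 = (deckAct p k τ hτ).aMap a.1

/-- `p'` is (isomorphic to) the orbit mutation `μ_[k](p)` of the covering `p` at direction
`[k]`: there are a `Γ`-equivariant maximal deletion of `2`-cycles from the orbit pre-mutation
and isomorphisms of the total and base quivers identifying `p'` with the quotient covering
`μ_[k](Q̃) → μ_[k](Q̃)/Γ`. -/
def IsOrbitMutCov {Qt Qt' : Quiv V} {Qb Qb' : Quiv W}
    (p : QuivHom Qt Qb) (k : W) (p' : QuivHom Qt' Qb') : Prop :=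
  ∃ pairs, OrbDelValid p k pairs ∧
    ∃ G, GChar p k pairs G ∧
      ∃ (ft : QuivHom (restrictQ (preMutS Qt (p.onV ⁻¹' {k})) (orbDeleted pairs)) Qt')
        (fb : QuivHom (quotQuiv (restrictQ (preMutS Qt (p.onV ⁻¹' {k})) (orbDeleted pairs)) G)
          Qb'),
        Function.Bijective ft.onV ∧ Function.Bijective ft.onA ∧
        Function.Bijective fb.onV ∧ Function.Bijective fb.onA ∧
        (∀ v, p'.onV (ft.onV v) = fb.onV (Quot.mk _ v)) ∧
        (∀ a, p'.onA (ft.onA a) = fb.onA (Quot.mk _ a))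

/-- `p` remains weakly admissible after every sequence of at most `m` orbit mutations. -/
def GWAn : ℕ → {Qt : Quiv V} → {Qb : Quiv W} → QuivHom Qt Qb → Prop
  | 0, _, _, p => WeaklyAdmissible p
  | (m + 1), _, _, p => WeaklyAdmissible p ∧
      ∀ (k : W) (Qt' : Quiv V) (Qb' : Quiv W) (p' : QuivHom Qt' Qb'),
        IsOrbitMutCov p k p' → GWAn m p'

/-- A covering is globally weakly admissible if it stays weakly admissible after any finite
sequence of orbit mutations in any directions. -/
def GloballyWeaklyAdmissible {Qt : Quiv V} {Qb : Quiv W} (p : QuivHom Qt Qb) : Prop :=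
  ∀ m : ℕ, GWAn m p

end CMu

namespace CMu

variable {V W : Type}

/-- The orbit pre-mutation `μ̃_[k](Q̃)` of a covering `p : Q̃ → Q` at direction `[k]`. -/
def orbPreMut {Qt : Quiv V} {Qb : Quiv W} (p : QuivHom Qt Qb) (k : W) : Quiv V :=
  preMutS Qt (p.onV ⁻¹' {k})

/-- The set of `Γ`-loops of the orbit pre-mutation: arrows joining two vertices in the same
orbit of the deck transformation group of `p`. -/
def gammaLoops {Qt : Quiv V} {Qb : Quiv W} (p : QuivHom Qt Qb) (k : W) :
    Set (orbPreMut p k).Arrow :=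
  {x | ∃ τ : QuivAut Qt, IsDeck p τ ∧ τ.vMap ((orbPreMut p k).src x) = (orbPreMut p k).tgt x}

end CMu

/-!
Let `Γ` be the deck group of `p`. For a regular covering, `π(Q)² ⊆ p_*(π(Q̃))` says that the
lift of the square of any cyclic walk closes up; lifting `u²` for `u` the image of a walk
`x̃ → τ x̃` shows that every deck transformation `τ` sending `x̃` to a point `τ x̃` of the same
connected component of `Q̃` sends `τ x̃` back to `x̃`.

After an orbit mutation at `[k]` the total quiver is `2`-acyclic by maximality of the
deletion, and the base quiver is loop-free exactly when no `Γ`-loop survives. Reversed and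
kept arrows cannot be `Γ`-loops because `Q` is loop-free. A composite arrow
`[αβ] : s β → t α` with `τ (s β) = t α` has, by the invariant, `τ (t α) = s β`, so its
`τ`-translate runs `t α → s β`: the two form a `2`-cycle which the maximal `Γ`-equivariant
deletion must have removed. The invariant passes to the mutated covering, since a walk in the
orbit mutation expands to a walk in `Q̃` with the same ends and deck transformations of a
covering that agree at one vertex agree along every walk. Induction on the number of mutations
then gives global weak admissibility.

For the regular covering `p_H`, reducedness of `H = p_*(π(Q_H))` is what makes `Q_H`
`2`-acyclic, since a `2`-cycle of `Q_H` maps to a `2`-cycle of `Q` lying in `H`.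
-/

namespace CMu

variable {V W : Type}

theorem subset_genH (Q : Quiv W) (S : HSet Q) (v : W) : S v ⊆ genH Q S v :=
  fun _ hw _ _ hS => hS v hw

namespace Walk

theorem comp_nil {Q : Quiv V} {x y : V} (w : Walk Q x y) : w.comp (.nil y) = w := by
  induction w with
  | nil => rfl
  | cons e w ih => exact congrArg (Walk.cons e) ih

theorem cast_cast {Q : Quiv V} {x y x' y' x'' y'' : V} (hx : x = x') (hy : y = y')
    (hx' : x' = x'') (hy' : y' = y'') (w : Walk Q x y) :
    (w.cast hx hy).cast hx' hy' = w.cast (hx.trans hx') (hy.trans hy') := by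
  subst hx hy hx' hy'; rfl

theorem cast_comp_cast_single {Q : Quiv W} {x₁ y₁ x₂ y₂ u v : W}
    (e₁ : Step Q x₁ y₁) (e₂ : Step Q x₂ y₂) (h₁ : x₁ = u) (h₂ : y₁ = v) (h₃ : x₂ = v)
    (h₄ : y₂ = u) (hy : x₂ = y₁) (hx : y₂ = x₁) (hu : u = x₁) :
    (((single e₁).cast h₁ h₂).comp ((single e₂).cast h₃ h₄)).cast hu hu =
      cons e₁ ((single e₂).cast hy hx) := by
  subst h₁ h₂ h₃ h₄; rfl

end Walk

theorem QuivHom.mapWalk_cast {Q : Quiv V} {R : Quiv W} (p : QuivHom Q R) {x y x' y' : V}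
    (hx : x = x') (hy : y = y') (w : Walk Q x y) :
    p.mapWalk (w.cast hx hy) = (p.mapWalk w).cast (congrArg p.onV hx) (congrArg p.onV hy) := by
  subst hx hy; rfl

theorem QuivHom.mapWalk_single {Q : Quiv V} {R : Quiv W} (p : QuivHom Q R) {x y : V}
    (e : Step Q x y) : p.mapWalk (Walk.single e) = p.mapStep e :=
  Walk.comp_nil _

theorem QuivHom.mapWalk_twoCycle {Q : Quiv V} {R : Quiv W} (p : QuivHom Q R) (a b : Q.Arrow)
    (h : Q.tgt a = Q.src b) (h' : Q.tgt b = Q.src a) :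
    (p.mapWalk (twoCycle a b h h')).cast (p.src_eq a).symm (p.src_eq a).symm =
      twoCycle (p.onA a) (p.onA b) (by rw [p.tgt_eq, p.src_eq, h])
        (by rw [p.tgt_eq, p.src_eq, h']) := by
  unfold twoCycle
  simp only [QuivHom.mapWalk, QuivHom.mapStep, QuivHom.mapWalk_cast, QuivHom.mapWalk_single,
    Walk.cast_cast]
  exact Walk.cast_comp_cast_single _ _ _ _ _ _ _ _ _

theorem twoAcyclic_of_isReducedH_coverH {Qt : Quiv V} {Qb : Quiv W} (p : QuivHom Qt Qb)
    (hred : IsReducedH Qb (coverH p)) : Qt.TwoAcyclic := fun a b h h' =>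
  hred (p.onA a) (p.onA b) _ _
    ⟨Qt.src a, (p.src_eq a).symm, twoCycle a b h h', by
      rw [p.mapWalk_twoCycle]; exact .refl _⟩

def QuivAut.refl (Q : Quiv V) : QuivAut Q :=
  ⟨Equiv.refl V, Equiv.refl _, fun _ => rfl, fun _ => rfl⟩

def QuivAut.trans {Q : Quiv V} (σ τ : QuivAut Q) : QuivAut Q where
  vMap := σ.vMap.trans τ.vMap
  aMap := σ.aMap.trans τ.aMap
  src_eq a := by simp [τ.src_eq, σ.src_eq]
  tgt_eq a := by simp [τ.tgt_eq, σ.tgt_eq]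

def QuivAut.symm {Q : Quiv V} (τ : QuivAut Q) : QuivAut Q where
  vMap := τ.vMap.symm
  aMap := τ.aMap.symm
  src_eq a := τ.vMap.injective (by simp [← τ.src_eq])
  tgt_eq a := τ.vMap.injective (by simp [← τ.tgt_eq])

theorem QuivAut.ext {Q : Quiv V} {σ τ : QuivAut Q} (hv : ∀ v, σ.vMap v = τ.vMap v)
    (ha : ∀ a, σ.aMap a = τ.aMap a) : σ = τ := by
  obtain ⟨σv, σa, _, _⟩ := σ
  obtain ⟨τv, τa, _, _⟩ := τ
  obtain rfl : σv = τv := Equiv.ext hv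
  obtain rfl : σa = τa := Equiv.ext ha
  rfl

theorem IsDeck.refl {Qt : Quiv V} {Qb : Quiv W} (p : QuivHom Qt Qb) :
    IsDeck p (QuivAut.refl Qt) := ⟨fun _ => rfl, fun _ => rfl⟩

theorem IsDeck.trans {Qt : Quiv V} {Qb : Quiv W} {p : QuivHom Qt Qb} {σ τ : QuivAut Qt}
    (hσ : IsDeck p σ) (hτ : IsDeck p τ) : IsDeck p (σ.trans τ) :=
  ⟨fun v => (hτ.1 _).trans (hσ.1 v), fun a => (hτ.2 _).trans (hσ.2 a)⟩

theorem IsDeck.symm {Qt : Quiv V} {Qb : Quiv W} {p : QuivHom Qt Qb} {τ : QuivAut Qt}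
    (hτ : IsDeck p τ) : IsDeck p τ.symm :=
  ⟨fun v => by simpa [QuivAut.symm] using (hτ.1 (τ.vMap.symm v)).symm,
   fun a => by simpa [QuivAut.symm] using (hτ.2 (τ.aMap.symm a)).symm⟩

namespace IsCovering

variable {Qt : Quiv V} {Qb : Quiv W} {p : QuivHom Qt Qb}

theorem tgt_injective (hc : IsCovering p) {a b : Qt.Arrow} (h : Qt.tgt a = Qt.tgt b)
    (hp : p.onA a = p.onA b) : a = b :=
  hc.2.1 a b h hp

theorem src_injective (hc : IsCovering p) {a b : Qt.Arrow} (h : Qt.src a = Qt.src b)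
    (hp : p.onA a = p.onA b) : a = b :=
  hc.2.2.2.1 a b h hp

theorem exists_tgt_lift (hc : IsCovering p) {v : V} {b : Qb.Arrow} (h : Qb.tgt b = p.onV v) :
    ∃ a : Qt.Arrow, Qt.tgt a = v ∧ p.onA a = b :=
  hc.2.2.1 v b h

theorem exists_src_lift (hc : IsCovering p) {v : V} {b : Qb.Arrow} (h : Qb.src b = p.onV v) :
    ∃ a : Qt.Arrow, Qt.src a = v ∧ p.onA a = b :=
  hc.2.2.2.2 v b h

theorem deck_aMap_eq_of_tgt (hc : IsCovering p) {σ τ : QuivAut Qt} (hσ : IsDeck p σ)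
    (hτ : IsDeck p τ) {a : Qt.Arrow} (h : σ.vMap (Qt.tgt a) = τ.vMap (Qt.tgt a)) :
    σ.aMap a = τ.aMap a :=
  hc.tgt_injective (by rw [σ.tgt_eq, τ.tgt_eq, h]) ((hσ.2 a).trans (hτ.2 a).symm)

theorem deck_aMap_eq_of_src (hc : IsCovering p) {σ τ : QuivAut Qt} (hσ : IsDeck p σ)
    (hτ : IsDeck p τ) {a : Qt.Arrow} (h : σ.vMap (Qt.src a) = τ.vMap (Qt.src a)) :
    σ.aMap a = τ.aMap a :=
  hc.src_injective (by rw [σ.src_eq, τ.src_eq, h]) ((hσ.2 a).trans (hτ.2 a).symm)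

theorem deck_vMap_eq_of_walk (hc : IsCovering p) {σ τ : QuivAut Qt} (hσ : IsDeck p σ)
    (hτ : IsDeck p τ) {x y : V} (w : Walk Qt x y) (hx : σ.vMap x = τ.vMap x) :
    σ.vMap y = τ.vMap y := by
  induction w with
  | nil => exact hx
  | cons e w ih =>
    apply ih
    cases e with
    | fwd a => rw [← σ.tgt_eq, ← τ.tgt_eq, hc.deck_aMap_eq_of_src hσ hτ hx]
    | bwd a => rw [← σ.src_eq, ← τ.src_eq, hc.deck_aMap_eq_of_tgt hσ hτ hx]

noncomputable def stepEnd (hc : IsCovering p) :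
    {x y : W} → Step Qb x y → (xt : V) → p.onV xt = x → V
  | _, _, .fwd b, _, h => Qt.tgt (hc.exists_src_lift h.symm).choose
  | _, _, .bwd b, _, h => Qt.src (hc.exists_tgt_lift h.symm).choose

theorem stepEnd_fwd (hc : IsCovering p) {b : Qb.Arrow} {xt : V} (h : p.onV xt = Qb.src b)
    {a : Qt.Arrow} (ha : Qt.src a = xt) (hpa : p.onA a = b) :
    hc.stepEnd (.fwd b) xt h = Qt.tgt a := by
  obtain ⟨h₁, h₂⟩ := (hc.exists_src_lift h.symm).choose_spec
  exact congrArg Qt.tgt (hc.src_injective (h₁.trans ha.symm) (h₂.trans hpa.symm))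

theorem stepEnd_bwd (hc : IsCovering p) {b : Qb.Arrow} {xt : V} (h : p.onV xt = Qb.tgt b)
    {a : Qt.Arrow} (ha : Qt.tgt a = xt) (hpa : p.onA a = b) :
    hc.stepEnd (.bwd b) xt h = Qt.src a := by
  obtain ⟨h₁, h₂⟩ := (hc.exists_tgt_lift h.symm).choose_spec
  exact congrArg Qt.src (hc.tgt_injective (h₁.trans ha.symm) (h₂.trans hpa.symm))

theorem stepEnd_over (hc : IsCovering p) {x y : W} (e : Step Qb x y) (xt : V)
    (h : p.onV xt = x) : p.onV (hc.stepEnd e xt h) = y := by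
  cases e with
  | fwd b =>
    obtain ⟨-, h₂⟩ := (hc.exists_src_lift h.symm).choose_spec
    exact (p.tgt_eq _).symm.trans (congrArg Qb.tgt h₂)
  | bwd b =>
    obtain ⟨-, h₂⟩ := (hc.exists_tgt_lift h.symm).choose_spec
    exact (p.src_eq _).symm.trans (congrArg Qb.src h₂)

theorem stepEnd_inv (hc : IsCovering p) {x y : W} (e : Step Qb x y) (xt : V)
    (h : p.onV xt = x) (h' : p.onV (hc.stepEnd e xt h) = y) :
    hc.stepEnd e.inv (hc.stepEnd e xt h) h' = xt := by
  cases e with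
  | fwd b =>
    obtain ⟨h₁, h₂⟩ := (hc.exists_src_lift h.symm).choose_spec
    exact (hc.stepEnd_bwd h' rfl h₂).trans h₁
  | bwd b =>
    obtain ⟨h₁, h₂⟩ := (hc.exists_tgt_lift h.symm).choose_spec
    exact (hc.stepEnd_fwd h' rfl h₂).trans h₁

theorem stepEnd_deck (hc : IsCovering p) {τ : QuivAut Qt} (hτ : IsDeck p τ)
    {x y : W} (e : Step Qb x y) (xt : V) (h : p.onV xt = x) (h' : p.onV (τ.vMap xt) = x) :
    hc.stepEnd e (τ.vMap xt) h' = τ.vMap (hc.stepEnd e xt h) := by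
  cases e with
  | fwd b =>
    obtain ⟨h₁, h₂⟩ := (hc.exists_src_lift h.symm).choose_spec
    exact (hc.stepEnd_fwd h' (by rw [τ.src_eq, h₁]) (by rw [hτ.2, h₂])).trans (τ.tgt_eq _)
  | bwd b =>
    obtain ⟨h₁, h₂⟩ := (hc.exists_tgt_lift h.symm).choose_spec
    exact (hc.stepEnd_bwd h' (by rw [τ.tgt_eq, h₁]) (by rw [hτ.2, h₂])).trans (τ.src_eq _)

noncomputable def liftEnd (hc : IsCovering p) :
    {x y : W} → Walk Qb x y → (xt : V) → p.onV xt = x → V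
  | _, _, .nil _, xt, _ => xt
  | _, _, .cons e w, xt, h => hc.liftEnd w (hc.stepEnd e xt h) (hc.stepEnd_over e xt h)

theorem liftEnd_over (hc : IsCovering p) {x y : W} (w : Walk Qb x y) (xt : V)
    (h : p.onV xt = x) : p.onV (hc.liftEnd w xt h) = y := by
  induction w generalizing xt with
  | nil => exact h
  | cons e w ih => exact ih _ _

theorem liftEnd_congr (hc : IsCovering p) {x y : W} (w : Walk Qb x y) {xt xt' : V}
    (hx : xt = xt') (h : p.onV xt = x) (h' : p.onV xt' = x) :
    hc.liftEnd w xt h = hc.liftEnd w xt' h' := by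
  subst hx; rfl

theorem liftEnd_comp (hc : IsCovering p) {x y z : W} (w : Walk Qb x y) (u : Walk Qb y z)
    (xt : V) (h : p.onV xt = x) :
    hc.liftEnd (w.comp u) xt h = hc.liftEnd u (hc.liftEnd w xt h) (hc.liftEnd_over w xt h) := by
  induction w generalizing xt with
  | nil => rfl
  | cons e w ih => exact ih u _ _

theorem liftEnd_cast (hc : IsCovering p) {x y x' y' : W} (hx : x = x') (hy : y = y')
    (w : Walk Qb x y) (xt : V) (h : p.onV xt = x') :
    hc.liftEnd (w.cast hx hy) xt h = hc.liftEnd w xt (h.trans hx.symm) := by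
  subst hx hy; rfl

theorem liftEnd_of_walkHtpy (hc : IsCovering p) {x y : W} {w u : Walk Qb x y}
    (hw : WalkHtpy Qb w u) (xt : V) (h : p.onV xt = x) :
    hc.liftEnd w xt h = hc.liftEnd u xt h := by
  induction hw generalizing xt with
  | refl => rfl
  | symm _ ih => exact (ih xt h).symm
  | trans _ _ ih₁ ih₂ => exact (ih₁ xt h).trans (ih₂ xt h)
  | cancel e w => exact hc.liftEnd_congr w (hc.stepEnd_inv e xt h _) _ _
  | congr e _ ih => exact ih _ _

theorem liftEnd_deck (hc : IsCovering p) {τ : QuivAut Qt} (hτ : IsDeck p τ)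
    {x y : W} (w : Walk Qb x y) (xt : V) (h : p.onV xt = x) (h' : p.onV (τ.vMap xt) = x) :
    hc.liftEnd w (τ.vMap xt) h' = τ.vMap (hc.liftEnd w xt h) := by
  induction w generalizing xt with
  | nil => rfl
  | cons e w ih =>
    exact (hc.liftEnd_congr w (hc.stepEnd_deck hτ e xt h h') _
      ((hτ.1 _).trans (hc.stepEnd_over e xt h))).trans (ih _ _ _)

theorem liftEnd_mapStep (hc : IsCovering p) {xt z : V} (e : Step Qt xt z) :
    hc.liftEnd (p.mapStep e) xt rfl = z := by
  cases e with
  | fwd a => exact (hc.liftEnd_cast _ _ _ _ _).trans (hc.stepEnd_fwd (p.src_eq a).symm rfl rfl)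
  | bwd a => exact (hc.liftEnd_cast _ _ _ _ _).trans (hc.stepEnd_bwd (p.tgt_eq a).symm rfl rfl)

theorem liftEnd_mapWalk (hc : IsCovering p) {xt yt : V} (wt : Walk Qt xt yt) :
    hc.liftEnd (p.mapWalk wt) xt rfl = yt := by
  induction wt with
  | nil => rfl
  | cons e w ih =>
    exact (hc.liftEnd_comp _ _ _ rfl).trans
      ((hc.liftEnd_congr _ (hc.liftEnd_mapStep e) _ rfl).trans ih)

theorem liftEnd_eq_self_of_regularCov (hc : IsCovering p) (hr : RegularCov p) {x : W}
    (w : Walk Qb x x) {x₀ xt : V} (h₀ : p.onV x₀ = x) (h : p.onV xt = x)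
    (hw : hc.liftEnd w x₀ h₀ = x₀) : hc.liftEnd w xt h = xt := by
  obtain ⟨ρ, hρ, rfl⟩ := hr x₀ xt (h₀.trans h.symm)
  rw [hc.liftEnd_deck hρ w x₀ h₀, hw]

end IsCovering

/-- The form in which `π(Q)² ⊆ p_*(π(Q̃))` survives orbit mutations: it is what excludes
`Γ`-loops among the composite arrows. -/
def DeckSwapsConnected {Qt : Quiv V} {Qb : Quiv W} (p : QuivHom Qt Qb) : Prop :=
  ∀ xt yt : V, p.onV xt = p.onV yt → Nonempty (Walk Qt xt yt) →
    ∀ τ : QuivAut Qt, IsDeck p τ → τ.vMap xt = yt → τ.vMap yt = xt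

theorem deckSwapsConnected_of_sqGens_subset {Qt : Quiv V} {Qb : Quiv W} {p : QuivHom Qt Qb}
    (hc : IsCovering p) (hr : RegularCov p) (hsq : ∀ v, sqGens Qb v ⊆ coverH p v) :
    DeckSwapsConnected p := by
  rintro xt _ hxy ⟨wt⟩ τ hτ rfl
  set u : Walk Qb (p.onV xt) (p.onV xt) := (p.mapWalk wt).cast rfl hxy.symm
  have hu : hc.liftEnd u xt rfl = τ.vMap xt := by
    rw [hc.liftEnd_cast, hc.liftEnd_mapWalk]
  obtain ⟨x₀, hx₀, w₀, hw₀⟩ := hsq _ ⟨u, rfl⟩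
  have hu₂ : hc.liftEnd (u.comp u) xt rfl = xt :=
    hc.liftEnd_eq_self_of_regularCov hr _ hx₀ rfl
      (by rw [← hc.liftEnd_of_walkHtpy hw₀, hc.liftEnd_cast, hc.liftEnd_mapWalk])
  calc τ.vMap (τ.vMap xt) = τ.vMap (hc.liftEnd u xt rfl) := by rw [hu]
    _ = hc.liftEnd u (τ.vMap xt) (hτ.1 xt) :=
      (hc.liftEnd_deck hτ u xt rfl _).symm
    _ = hc.liftEnd (u.comp u) xt rfl := by
      rw [hc.liftEnd_comp]; exact hc.liftEnd_congr u hu.symm _ _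
    _ = xt := hu₂

section Quotient

variable {R : Quiv V} {G : Set (QuivAut R)}

theorem quot_mk_eq_iff_autRelV (hV : Equivalence (autRelV G)) {x y : V} :
    Quot.mk (autRelV G) x = Quot.mk (autRelV G) y ↔ autRelV G x y :=
  Quot.eq.trans hV.eqvGen_iff

theorem quot_mk_eq_iff_autRelA (hA : Equivalence (autRelA G)) {a b : R.Arrow} :
    Quot.mk (autRelA G) a = Quot.mk (autRelA G) b ↔ autRelA G a b :=
  Quot.eq.trans hA.eqvGen_iff

theorem isDeck_quotHom_of_mem {σ : QuivAut R} (hσ : σ ∈ G) : IsDeck (quotHom R G) σ :=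
  ⟨fun _ => (Quot.sound ⟨σ, hσ, rfl⟩).symm, fun _ => (Quot.sound ⟨σ, hσ, rfl⟩).symm⟩

theorem regularCov_quotHom (hV : Equivalence (autRelV G)) : RegularCov (quotHom R G) :=
  fun _ _ hxy =>
    let ⟨σ, hσ, hσxy⟩ := (quot_mk_eq_iff_autRelV hV).mp hxy
    ⟨σ, isDeck_quotHom_of_mem hσ, hσxy⟩

theorem isCovering_quotHom (hV : Equivalence (autRelV G)) (hA : Equivalence (autRelA G))
    (hfix_tgt : ∀ σ ∈ G, ∀ a, σ.vMap (R.tgt a) = R.tgt a → σ.aMap a = a)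
    (hfix_src : ∀ σ ∈ G, ∀ a, σ.vMap (R.src a) = R.src a → σ.aMap a = a) :
    IsCovering (quotHom R G) := by
  refine ⟨fun y => Quot.exists_rep y, ?_, ?_, ?_, ?_⟩
  · rintro a _ htgt hab
    obtain ⟨σ, hσ, rfl⟩ := (quot_mk_eq_iff_autRelA hA).mp hab
    exact (hfix_tgt σ hσ a (by rw [← σ.tgt_eq]; exact htgt.symm)).symm
  · rintro v ⟨b⟩ hbv
    obtain ⟨σ, hσ, hσb⟩ := (quot_mk_eq_iff_autRelV hV).mp hbv
    exact ⟨σ.aMap b, (σ.tgt_eq b).trans hσb, (Quot.sound ⟨σ, hσ, rfl⟩).symm⟩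
  · rintro a _ hsrc hab
    obtain ⟨σ, hσ, rfl⟩ := (quot_mk_eq_iff_autRelA hA).mp hab
    exact (hfix_src σ hσ a (by rw [← σ.src_eq]; exact hsrc.symm)).symm
  · rintro v ⟨b⟩ hbv
    obtain ⟨σ, hσ, hσb⟩ := (quot_mk_eq_iff_autRelV hV).mp hbv
    exact ⟨σ.aMap b, (σ.src_eq b).trans hσb, (Quot.sound ⟨σ, hσ, rfl⟩).symm⟩

end Quotient

theorem preMutS_loopFree {Q : Quiv V} (h2 : Q.TwoAcyclic) (S : Set V) :
    (preMutS Q S).LoopFree := by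
  intro x h
  rcases x with ⟨a, _⟩ | ⟨a, _⟩ | ⟨q, hq⟩
  · exact h2 a a h.symm h.symm
  · exact h2 a a h h
  · exact h2 q.1 q.2 h.symm hq.2

def phiQMapS (Q : Quiv V) (S : Set V) : QMap (preMutS Q S) Q where
  toWalk x := match x with
    | .inl a => Walk.single (.fwd a.1)
    | .inr (.inl a) => Walk.single (.bwd a.1)
    | .inr (.inr q) => Walk.cons (.fwd q.1.2) ((Walk.single (.fwd q.1.1)).cast q.2.2.symm rfl)

abbrev orbMut {Qt : Quiv V} {Qb : Quiv W} (p : QuivHom Qt Qb) (k : W)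
    (pairs : Set ((preMutS Qt (p.onV ⁻¹' {k})).Arrow × (preMutS Qt (p.onV ⁻¹' {k})).Arrow)) :
    Quiv V :=
  restrictQ (preMutS Qt (p.onV ⁻¹' {k})) (orbDeleted pairs)

section OrbitMutation

variable {Qt : Quiv V} {Qb : Quiv W} {p : QuivHom Qt Qb} {k : W}
  {pairs : Set ((preMutS Qt (p.onV ⁻¹' {k})).Arrow × (preMutS Qt (p.onV ⁻¹' {k})).Arrow)}
  {G : Set (QuivAut (orbMut p k pairs))}

theorem deckAct_trans_apply {σ τ : QuivAut Qt} (hσ : IsDeck p σ) (hτ : IsDeck p τ)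
    (x : (preMutS Qt (p.onV ⁻¹' {k})).Arrow) :
    (deckAct p k (σ.trans τ) (hσ.trans hτ)).aMap x
      = (deckAct p k τ hτ).aMap ((deckAct p k σ hσ).aMap x) := by
  rcases x with _ | _ | _ <;> rfl

theorem deckAct_refl_apply (x : (preMutS Qt (p.onV ⁻¹' {k})).Arrow) :
    (deckAct p k (QuivAut.refl Qt) (IsDeck.refl p)).aMap x = x := by
  rcases x with _ | _ | _ <;> rfl

theorem deckAct_symm_apply {τ : QuivAut Qt} (hτ : IsDeck p τ)
    (x : (preMutS Qt (p.onV ⁻¹' {k})).Arrow) :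
    (deckAct p k τ.symm hτ.symm).aMap ((deckAct p k τ hτ).aMap x) = x := by
  rcases x with ⟨a, _⟩ | ⟨a, _⟩ | ⟨q, _⟩
  · exact congrArg Sum.inl (Subtype.ext (τ.aMap.symm_apply_apply a))
  · exact congrArg (Sum.inr ∘ Sum.inl) (Subtype.ext (τ.aMap.symm_apply_apply a))
  · exact congrArg (Sum.inr ∘ Sum.inr) (Subtype.ext ((τ.aMap.prodCongr τ.aMap).symm_apply_apply q))

theorem deckAct_mem_orbDeleted (hval : OrbDelValid p k pairs) {τ : QuivAut Qt}
    (hτ : IsDeck p τ) {x : (preMutS Qt (p.onV ⁻¹' {k})).Arrow} (hx : x ∈ orbDeleted pairs) :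
    (deckAct p k τ hτ).aMap x ∈ orbDeleted pairs := by
  obtain ⟨q, hq, hxq⟩ := hx
  refine ⟨_, (hval.2.2.2 τ hτ q).mp hq, ?_⟩
  rcases hxq with rfl | rfl
  exacts [Or.inl rfl, Or.inr rfl]

theorem deckAct_mem_orbDeleted_iff (hval : OrbDelValid p k pairs) {τ : QuivAut Qt}
    (hτ : IsDeck p τ) (x : (preMutS Qt (p.onV ⁻¹' {k})).Arrow) :
    (deckAct p k τ hτ).aMap x ∈ orbDeleted pairs ↔ x ∈ orbDeleted pairs := by
  refine ⟨fun h => ?_, deckAct_mem_orbDeleted hval hτ⟩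
  simpa only [deckAct_symm_apply] using deckAct_mem_orbDeleted hval hτ.symm h

def orbMutAut (hval : OrbDelValid p k pairs) (τ : QuivAut Qt) (hτ : IsDeck p τ) :
    QuivAut (orbMut p k pairs) where
  vMap := τ.vMap
  aMap := (deckAct p k τ hτ).aMap.subtypeEquiv
    fun a => not_congr (deckAct_mem_orbDeleted_iff hval hτ a).symm
  src_eq a := (deckAct p k τ hτ).src_eq a.1
  tgt_eq a := (deckAct p k τ hτ).tgt_eq a.1

theorem orbMutAut_mem (hval : OrbDelValid p k pairs) (hG : GChar p k pairs G)
    {τ : QuivAut Qt} (hτ : IsDeck p τ) : orbMutAut hval τ hτ ∈ G :=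
  (hG _).mpr ⟨τ, hτ, fun _ => rfl, fun _ => rfl⟩

theorem exists_eq_orbMutAut (hval : OrbDelValid p k pairs) (hG : GChar p k pairs G)
    {σ : QuivAut (orbMut p k pairs)} (hσ : σ ∈ G) :
    ∃ (τ : QuivAut Qt) (hτ : IsDeck p τ), σ = orbMutAut hval τ hτ :=
  let ⟨τ, hτ, hv, ha⟩ := (hG σ).mp hσ
  ⟨τ, hτ, QuivAut.ext hv fun a => Subtype.ext (ha a)⟩

theorem equivalence_autRelV (hval : OrbDelValid p k pairs) (hG : GChar p k pairs G) :
    Equivalence (autRelV G) where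
  refl _ := ⟨_, orbMutAut_mem hval hG (IsDeck.refl p), rfl⟩
  symm := by
    rintro x _ ⟨σ, hσ, rfl⟩
    obtain ⟨τ, hτ, rfl⟩ := exists_eq_orbMutAut hval hG hσ
    exact ⟨_, orbMutAut_mem hval hG hτ.symm, τ.vMap.symm_apply_apply x⟩
  trans := by
    rintro x _ _ ⟨σ₁, hσ₁, rfl⟩ ⟨σ₂, hσ₂, rfl⟩
    obtain ⟨τ₁, hτ₁, rfl⟩ := exists_eq_orbMutAut hval hG hσ₁
    obtain ⟨τ₂, hτ₂, rfl⟩ := exists_eq_orbMutAut hval hG hσ₂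
    exact ⟨_, orbMutAut_mem hval hG (hτ₁.trans hτ₂), rfl⟩

theorem equivalence_autRelA (hval : OrbDelValid p k pairs) (hG : GChar p k pairs G) :
    Equivalence (autRelA G) where
  refl a := ⟨_, orbMutAut_mem hval hG (IsDeck.refl p), Subtype.ext (deckAct_refl_apply a.1)⟩
  symm := by
    rintro a _ ⟨σ, hσ, rfl⟩
    obtain ⟨τ, hτ, rfl⟩ := exists_eq_orbMutAut hval hG hσ
    exact ⟨_, orbMutAut_mem hval hG hτ.symm, Subtype.ext (deckAct_symm_apply hτ a.1)⟩
  trans := by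
    rintro a _ _ ⟨σ₁, hσ₁, rfl⟩ ⟨σ₂, hσ₂, rfl⟩
    obtain ⟨τ₁, hτ₁, rfl⟩ := exists_eq_orbMutAut hval hG hσ₁
    obtain ⟨τ₂, hτ₂, rfl⟩ := exists_eq_orbMutAut hval hG hσ₂
    exact ⟨_, orbMutAut_mem hval hG (hτ₁.trans hτ₂), Subtype.ext (deckAct_trans_apply hτ₁ hτ₂ a.1)⟩

theorem deckAct_eq_self_of_tgt (hc : IsCovering p) {τ : QuivAut Qt} (hτ : IsDeck p τ)
    {x : (preMutS Qt (p.onV ⁻¹' {k})).Arrow}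
    (hx : τ.vMap ((preMutS Qt (p.onV ⁻¹' {k})).tgt x) = (preMutS Qt (p.onV ⁻¹' {k})).tgt x) :
    (deckAct p k τ hτ).aMap x = x := by
  rcases x with ⟨a, _⟩ | ⟨a, _⟩ | ⟨q, hq⟩
  · exact congrArg Sum.inl (Subtype.ext (hc.deck_aMap_eq_of_tgt hτ (IsDeck.refl p) hx))
  · exact congrArg (Sum.inr ∘ Sum.inl)
      (Subtype.ext (hc.deck_aMap_eq_of_src hτ (IsDeck.refl p) hx))
  · have h₁ : τ.aMap q.1 = q.1 := hc.deck_aMap_eq_of_tgt hτ (IsDeck.refl p) hx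
    have h₂ : τ.aMap q.2 = q.2 := hc.deck_aMap_eq_of_tgt hτ (IsDeck.refl p)
      (by rw [hq.2, ← τ.src_eq, h₁]; rfl)
    exact congrArg (Sum.inr ∘ Sum.inr) (Subtype.ext (Prod.ext h₁ h₂))

theorem deckAct_eq_self_of_src (hc : IsCovering p) {τ : QuivAut Qt} (hτ : IsDeck p τ)
    {x : (preMutS Qt (p.onV ⁻¹' {k})).Arrow}
    (hx : τ.vMap ((preMutS Qt (p.onV ⁻¹' {k})).src x) = (preMutS Qt (p.onV ⁻¹' {k})).src x) :
    (deckAct p k τ hτ).aMap x = x := by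
  rcases x with ⟨a, _⟩ | ⟨a, _⟩ | ⟨q, hq⟩
  · exact congrArg Sum.inl (Subtype.ext (hc.deck_aMap_eq_of_src hτ (IsDeck.refl p) hx))
  · exact congrArg (Sum.inr ∘ Sum.inl)
      (Subtype.ext (hc.deck_aMap_eq_of_tgt hτ (IsDeck.refl p) hx))
  · have h₂ : τ.aMap q.2 = q.2 := hc.deck_aMap_eq_of_src hτ (IsDeck.refl p) hx
    have h₁ : τ.aMap q.1 = q.1 := hc.deck_aMap_eq_of_src hτ (IsDeck.refl p)
      (by rw [← hq.2, ← τ.tgt_eq, h₂]; rfl)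
    exact congrArg (Sum.inr ∘ Sum.inr) (Subtype.ext (Prod.ext h₁ h₂))

theorem isCovering_quotHom_orbMut (hc : IsCovering p) (hval : OrbDelValid p k pairs)
    (hG : GChar p k pairs G) : IsCovering (quotHom (orbMut p k pairs) G) := by
  refine isCovering_quotHom (equivalence_autRelV hval hG) (equivalence_autRelA hval hG)
    (fun σ hσ a ha => ?_) (fun σ hσ a ha => ?_) <;>
    obtain ⟨τ, hτ, rfl⟩ := exists_eq_orbMutAut hval hG hσ
  exacts [Subtype.ext (deckAct_eq_self_of_tgt hc hτ ha),
    Subtype.ext (deckAct_eq_self_of_src hc hτ ha)]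

theorem composite_endpoints_not_mem (hlf : Qb.LoopFree) {q : Qt.Arrow × Qt.Arrow}
    (hq : Qt.src q.1 ∈ p.onV ⁻¹' {k} ∧ Qt.tgt q.2 = Qt.src q.1) :
    Qt.src q.2 ∉ p.onV ⁻¹' {k} ∧ Qt.tgt q.1 ∉ p.onV ⁻¹' {k} :=
  ⟨fun h => hlf (p.onA q.2) (by rw [p.src_eq, p.tgt_eq, hq.2]; exact h.trans hq.1.symm),
   fun h => hlf (p.onA q.1) (by rw [p.src_eq, p.tgt_eq]; exact hq.1.trans h.symm)⟩

theorem exists_eq_reversed_of_mem (hlf : Qb.LoopFree) {x : (preMutS Qt (p.onV ⁻¹' {k})).Arrow}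
    (hx : (preMutS Qt (p.onV ⁻¹' {k})).src x ∈ p.onV ⁻¹' {k} ∨
      (preMutS Qt (p.onV ⁻¹' {k})).tgt x ∈ p.onV ⁻¹' {k}) :
    ∃ a ha, x = .inr (.inl ⟨a, ha⟩) := by
  rcases x with ⟨a, ha⟩ | ⟨a, ha⟩ | ⟨q, hq⟩
  · exact (hx.elim ha.1 ha.2).elim
  · exact ⟨a, ha, rfl⟩
  · exact (hx.elim (composite_endpoints_not_mem hlf hq).1
      (composite_endpoints_not_mem hlf hq).2).elim

theorem orbMut_twoAcyclic (h2 : Qt.TwoAcyclic) (hlf : Qb.LoopFree)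
    (hval : OrbDelValid p k pairs) : (orbMut p k pairs).TwoAcyclic := by
  rintro ⟨x, hx⟩ ⟨y, hy⟩ hxy hyx
  change (preMutS Qt _).tgt x = (preMutS Qt _).src y at hxy
  change (preMutS Qt _).tgt y = (preMutS Qt _).src x at hyx
  by_cases hS : (preMutS Qt (p.onV ⁻¹' {k})).src x ∈ p.onV ⁻¹' {k} ∨
      (preMutS Qt (p.onV ⁻¹' {k})).tgt x ∈ p.onV ⁻¹' {k}
  · have hS' : (preMutS Qt (p.onV ⁻¹' {k})).src y ∈ p.onV ⁻¹' {k} ∨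
        (preMutS Qt (p.onV ⁻¹' {k})).tgt y ∈ p.onV ⁻¹' {k} := by
      rw [← hxy, hyx]; exact hS.symm
    obtain ⟨a, _, rfl⟩ := exists_eq_reversed_of_mem hlf hS
    obtain ⟨b, _, rfl⟩ := exists_eq_reversed_of_mem hlf hS'
    exact h2 a b hyx.symm hxy.symm
  · push Not at hS
    exact hval.2.2.1 x y hx hy hxy hyx hS.1 hS.2 (preMutS_loopFree h2 _ x)

theorem not_mem_gammaLoops (h2 : Qt.TwoAcyclic) (hlf : Qb.LoopFree)
    (hsw : DeckSwapsConnected p) (hval : OrbDelValid p k pairs)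
    {x : (preMutS Qt (p.onV ⁻¹' {k})).Arrow} (hx : x ∉ orbDeleted pairs) :
    x ∉ gammaLoops p k := by
  rintro ⟨τ, hτ, hτx⟩
  change τ.vMap ((preMutS Qt _).src x) = (preMutS Qt _).tgt x at hτx
  rcases x with ⟨b, _⟩ | ⟨b, _⟩ | ⟨q, hq⟩
  · exact hlf (p.onA b) (by
      rw [p.src_eq, p.tgt_eq]; exact (hτ.1 _).symm.trans (congrArg p.onV hτx))
  · exact hlf (p.onA b) (by
      rw [p.src_eq, p.tgt_eq]; exact (congrArg p.onV hτx).symm.trans (hτ.1 _))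
  · have hτ' : τ.vMap (Qt.tgt q.1) = Qt.src q.2 :=
      hsw _ _ (by rw [← hτx, hτ.1]) ⟨(phiQMapS Qt _).toWalk (.inr (.inr ⟨q, hq⟩))⟩ τ hτ hτx
    -- `x` and its `τ`-translate form a `2`-cycle that the maximal deletion would have removed.
    exact hval.2.2.1 _ _ hx ((deckAct_mem_orbDeleted_iff hval hτ _).not.mpr hx)
      (hτx.symm.trans (τ.src_eq q.2).symm) ((τ.tgt_eq q.1).trans hτ')
      (composite_endpoints_not_mem hlf hq).1 (composite_endpoints_not_mem hlf hq).2
      (preMutS_loopFree h2 _ _)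

theorem loopFree_quotQuiv_orbMut (h2 : Qt.TwoAcyclic) (hlf : Qb.LoopFree)
    (hsw : DeckSwapsConnected p) (hval : OrbDelValid p k pairs) (hG : GChar p k pairs G) :
    (quotQuiv (orbMut p k pairs) G).LoopFree := by
  rintro ⟨a⟩ hloop
  obtain ⟨σ, hσ, hσa⟩ := (quot_mk_eq_iff_autRelV (equivalence_autRelV hval hG)).mp hloop
  obtain ⟨τ, hτ, rfl⟩ := exists_eq_orbMutAut hval hG hσ
  exact not_mem_gammaLoops h2 hlf hsw hval a.2 ⟨τ, hτ, hσa⟩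

theorem deckSwapsConnected_quotHom_orbMut (hc : IsCovering p) (hsw : DeckSwapsConnected p)
    (hval : OrbDelValid p k pairs) (hG : GChar p k pairs G) :
    DeckSwapsConnected (quotHom (orbMut p k pairs) G) := by
  rintro x y hxy ⟨w⟩ σ hσ hσx
  obtain ⟨σ₀, hσ₀, hσ₀x⟩ := (quot_mk_eq_iff_autRelV (equivalence_autRelV hval hG)).mp hxy
  obtain ⟨τ, hτ, rfl⟩ := exists_eq_orbMutAut hval hG hσ₀
  have hτy : τ.vMap y = x := hsw x y (by rw [← hσ₀x]; exact (hτ.1 x).symm)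
    ⟨((inclQMap _ _).comp (phiQMapS Qt _)).mapWalk w⟩ τ hτ hσ₀x
  rw [(isCovering_quotHom_orbMut hc hval hG).deck_vMap_eq_of_walk hσ
    (isDeck_quotHom_of_mem hσ₀) w (hσx.trans hσ₀x.symm)]
  exact hτy

end OrbitMutation

section

variable {V' W' : Type} {A : Quiv V} {B : Quiv W} {A' : Quiv V'} {B' : Quiv W'}

structure CoveringIso (q : QuivHom A B) (p : QuivHom A' B') where
  totV : V ≃ V'
  totA : A.Arrow ≃ A'.Arrow
  baseV : W ≃ W'
  baseA : B.Arrow ≃ B'.Arrow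
  tot_src : ∀ a, A'.src (totA a) = totV (A.src a)
  tot_tgt : ∀ a, A'.tgt (totA a) = totV (A.tgt a)
  base_src : ∀ b, B'.src (baseA b) = baseV (B.src b)
  base_tgt : ∀ b, B'.tgt (baseA b) = baseV (B.tgt b)
  onV_comm : ∀ v, p.onV (totV v) = baseV (q.onV v)
  onA_comm : ∀ a, p.onA (totA a) = baseA (q.onA a)

namespace CoveringIso

variable {q : QuivHom A B} {p : QuivHom A' B'}

theorem src_totA_symm (e : CoveringIso q p) (a : A'.Arrow) :
    A.src (e.totA.symm a) = e.totV.symm (A'.src a) := by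
  rw [Equiv.eq_symm_apply, ← e.tot_src, Equiv.apply_symm_apply]

theorem tgt_totA_symm (e : CoveringIso q p) (a : A'.Arrow) :
    A.tgt (e.totA.symm a) = e.totV.symm (A'.tgt a) := by
  rw [Equiv.eq_symm_apply, ← e.tot_tgt, Equiv.apply_symm_apply]

def symm (e : CoveringIso q p) : CoveringIso p q where
  totV := e.totV.symm
  totA := e.totA.symm
  baseV := e.baseV.symm
  baseA := e.baseA.symm
  tot_src := e.src_totA_symm
  tot_tgt := e.tgt_totA_symm
  base_src b := by rw [Equiv.eq_symm_apply, ← e.base_src, Equiv.apply_symm_apply]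
  base_tgt b := by rw [Equiv.eq_symm_apply, ← e.base_tgt, Equiv.apply_symm_apply]
  onV_comm v := by rw [Equiv.eq_symm_apply, ← e.onV_comm, Equiv.apply_symm_apply]
  onA_comm a := by rw [Equiv.eq_symm_apply, ← e.onA_comm, Equiv.apply_symm_apply]

def totHom (e : CoveringIso q p) : QuivHom A A' :=
  ⟨e.totV, e.totA, e.tot_src, e.tot_tgt⟩

def conjAut (e : CoveringIso q p) (σ : QuivAut A) : QuivAut A' where
  vMap := e.totV.symm.trans (σ.vMap.trans e.totV)
  aMap := e.totA.symm.trans (σ.aMap.trans e.totA)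
  src_eq a := by
    simp only [Equiv.trans_apply]; rw [e.tot_src, σ.src_eq, e.src_totA_symm]
  tgt_eq a := by
    simp only [Equiv.trans_apply]; rw [e.tot_tgt, σ.tgt_eq, e.tgt_totA_symm]

theorem conjAut_vMap (e : CoveringIso q p) (σ : QuivAut A) (v : V') :
    (e.conjAut σ).vMap v = e.totV (σ.vMap (e.totV.symm v)) := rfl

theorem isDeck_conjAut (e : CoveringIso q p) {σ : QuivAut A} (hσ : IsDeck q σ) :
    IsDeck p (e.conjAut σ) := by
  constructor
  · intro v
    rw [conjAut_vMap, e.onV_comm, hσ.1, ← e.onV_comm, Equiv.apply_symm_apply]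
  · intro a
    change p.onA (e.totA (σ.aMap (e.totA.symm a))) = _
    rw [e.onA_comm, hσ.2, ← e.onA_comm, Equiv.apply_symm_apply]

theorem isCovering (e : CoveringIso q p) (hq : IsCovering q) : IsCovering p := by
  refine ⟨fun w => ?_, fun a b h hp => ?_, fun v b h => ?_, fun a b h hp => ?_, fun v b h => ?_⟩
  · obtain ⟨v, hv⟩ := hq.1 (e.baseV.symm w)
    exact ⟨e.totV v, by rw [e.onV_comm, hv, Equiv.apply_symm_apply]⟩
  · obtain ⟨a, rfl⟩ := e.totA.surjective a
    obtain ⟨b, rfl⟩ := e.totA.surjective b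
    rw [e.tot_tgt, e.tot_tgt] at h
    rw [e.onA_comm, e.onA_comm] at hp
    rw [hq.tgt_injective (e.totV.injective h) (e.baseA.injective hp)]
  · obtain ⟨v, rfl⟩ := e.totV.surjective v
    obtain ⟨b, rfl⟩ := e.baseA.surjective b
    rw [e.base_tgt, e.onV_comm] at h
    obtain ⟨a, ha, hqa⟩ := hq.exists_tgt_lift (e.baseV.injective h)
    exact ⟨e.totA a, by rw [e.tot_tgt, ha], by rw [e.onA_comm, hqa]⟩
  · obtain ⟨a, rfl⟩ := e.totA.surjective a
    obtain ⟨b, rfl⟩ := e.totA.surjective b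
    rw [e.tot_src, e.tot_src] at h
    rw [e.onA_comm, e.onA_comm] at hp
    rw [hq.src_injective (e.totV.injective h) (e.baseA.injective hp)]
  · obtain ⟨v, rfl⟩ := e.totV.surjective v
    obtain ⟨b, rfl⟩ := e.baseA.surjective b
    rw [e.base_src, e.onV_comm] at h
    obtain ⟨a, ha, hqa⟩ := hq.exists_src_lift (e.baseV.injective h)
    exact ⟨e.totA a, by rw [e.tot_src, ha], by rw [e.onA_comm, hqa]⟩

theorem regularCov (e : CoveringIso q p) (hr : RegularCov q) : RegularCov p := by
  intro x y hxy
  obtain ⟨x, rfl⟩ := e.totV.surjective x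
  obtain ⟨y, rfl⟩ := e.totV.surjective y
  rw [e.onV_comm, e.onV_comm] at hxy
  obtain ⟨σ, hσ, hσx⟩ := hr x y (e.baseV.injective hxy)
  exact ⟨e.conjAut σ, e.isDeck_conjAut hσ, by rw [conjAut_vMap, Equiv.symm_apply_apply, hσx]⟩

theorem twoAcyclic (e : CoveringIso q p) (h2 : A.TwoAcyclic) : A'.TwoAcyclic := by
  intro a b hab hba
  obtain ⟨a, rfl⟩ := e.totA.surjective a
  obtain ⟨b, rfl⟩ := e.totA.surjective b
  rw [e.tot_src, e.tot_tgt] at hab hba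
  exact h2 a b (e.totV.injective hab) (e.totV.injective hba)

theorem loopFree (e : CoveringIso q p) (hlf : B.LoopFree) : B'.LoopFree := by
  intro b h
  obtain ⟨b, rfl⟩ := e.baseA.surjective b
  rw [e.base_src, e.base_tgt] at h
  exact hlf b (e.baseV.injective h)

theorem deckSwapsConnected (e : CoveringIso q p) (hsw : DeckSwapsConnected q) :
    DeckSwapsConnected p := by
  intro x y hxy ⟨w⟩ τ hτ hτx
  have key := hsw (e.totV.symm x) (e.totV.symm y)
    ((e.symm.onV_comm x).trans ((congrArg _ hxy).trans (e.symm.onV_comm y).symm))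
    ⟨e.symm.totHom.mapWalk w⟩
    (e.symm.conjAut τ) (e.symm.isDeck_conjAut hτ)
    (by simp only [conjAut_vMap, symm, Equiv.symm_symm, Equiv.apply_symm_apply, hτx])
  simpa only [conjAut_vMap, symm, Equiv.symm_symm, Equiv.apply_symm_apply,
    Equiv.apply_eq_iff_eq] using key

end CoveringIso

end

theorem IsOrbitMutCov.exists_coveringIso {Qt Qt' : Quiv V} {Qb Qb' : Quiv W}
    {p : QuivHom Qt Qb} {k : W} {p' : QuivHom Qt' Qb'} (h : IsOrbitMutCov p k p') :
    ∃ pairs, OrbDelValid p k pairs ∧ ∃ G, GChar p k pairs G ∧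
      Nonempty (CoveringIso (quotHom (orbMut p k pairs) G) p') := by
  obtain ⟨pairs, hval, G, hG, ft, fb, hftV, hftA, hfbV, hfbA, hpv, hpa⟩ := h
  exact ⟨pairs, hval, G, hG, ⟨Equiv.ofBijective _ hftV, Equiv.ofBijective _ hftA,
    Equiv.ofBijective _ hfbV, Equiv.ofBijective _ hfbA, ft.src_eq, ft.tgt_eq, fb.src_eq,
    fb.tgt_eq, hpv, hpa⟩⟩

theorem IsOrbitMutCov.weaklyAdmissible_deckSwapsConnected {Qt Qt' : Quiv V}
    {Qb Qb' : Quiv W} {p : QuivHom Qt Qb} {k : W} {p' : QuivHom Qt' Qb'}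
    (h : IsOrbitMutCov p k p') (hwa : WeaklyAdmissible p) (hsw : DeckSwapsConnected p) :
    WeaklyAdmissible p' ∧ DeckSwapsConnected p' := by
  obtain ⟨hc, -, h2, hlf⟩ := hwa
  obtain ⟨pairs, hval, G, hG, ⟨e⟩⟩ := h.exists_coveringIso
  exact ⟨⟨e.isCovering (isCovering_quotHom_orbMut hc hval hG),
      e.regularCov (regularCov_quotHom (equivalence_autRelV hval hG)),
      e.twoAcyclic (orbMut_twoAcyclic h2 hlf hval),
      e.loopFree (loopFree_quotQuiv_orbMut h2 hlf hsw hval hG)⟩,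
    e.deckSwapsConnected (deckSwapsConnected_quotHom_orbMut hc hsw hval hG)⟩

theorem gwan_of_deckSwapsConnected (m : ℕ) {Qt : Quiv V} {Qb : Quiv W} {p : QuivHom Qt Qb}
    (hwa : WeaklyAdmissible p) (hsw : DeckSwapsConnected p) : GWAn m p := by
  induction m generalizing Qt Qb p with
  | zero => exact hwa
  | succ m ih =>
    refine ⟨hwa, fun k Qt' Qb' p' hmut => ?_⟩
    obtain ⟨hwa', hsw'⟩ := hmut.weaklyAdmissible_deckSwapsConnected hwa hsw
    exact ih hwa' hsw'

theorem globallyWeaklyAdmissible_of_sqGens_subset {Qt : Quiv V} {Qb : Quiv W}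
    {p : QuivHom Qt Qb} (hwa : WeaklyAdmissible p) (hsq : ∀ v, sqGens Qb v ⊆ coverH p v) :
    GloballyWeaklyAdmissible p := fun m =>
  gwan_of_deckSwapsConnected m hwa (deckSwapsConnected_of_sqGens_subset hwa.1 hwa.2.1 hsq)

end CMu

namespace CMu

/-- **Coverings containing all squares of cyclic walks are globally weakly admissible**
(Proposition `prop: global admissible pi square`).  Let `p : Q̃ → Q` be a weakly admissible
covering such that `π(Q)² ⊆ p_*(π(Q̃))`, where `π(Q)²` is the normal subgroupoid of the free
groupoid generated by the squares of all cyclic walks.  Then `p` is globally weakly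
admissible.  Consequently, for any reduced homotopy `H` on a loop-free quiver `Q` with
`π(Q)² ⊆ H`, any regular covering corresponding to `H` under the Galois correspondence
(i.e. any regular covering `p'` with `p'_*(π(Q_H)) = H`) is globally weakly admissible. -/
theorem pi_square_globally_weakly_admissible {V W : Type} {Qt : Quiv V} {Qb : Quiv W}
    (p : QuivHom Qt Qb) (hwa : WeaklyAdmissible p)
    (hsq : ∀ v, genH Qb (sqGens Qb) v ⊆ coverH p v) :
    GloballyWeaklyAdmissible p ∧
    ∀ (H : HSet Qb), IsHomotopy Qb H → IsReducedH Qb H → Qb.LoopFree →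
      (∀ v, genH Qb (sqGens Qb) v ⊆ H v) →
      ∀ {V' : Type} (Qt' : Quiv V') (p' : QuivHom Qt' Qb),
        IsCovering p' → RegularCov p' → (∀ v, coverH p' v = H v) →
        GloballyWeaklyAdmissible p' := by
  refine ⟨globallyWeaklyAdmissible_of_sqGens_subset hwa
    fun v => (subset_genH Qb _ v).trans (hsq v), ?_⟩
  intro H _ hred hlf hsub V' Qt' p' hc hr hcov
  obtain rfl : coverH p' = H := funext hcov
  exact globallyWeaklyAdmissible_of_sqGens_subset
    ⟨hc, hr, twoAcyclic_of_isReducedH_coverH p' hred, hlf⟩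
    fun v => (subset_genH Qb _ v).trans (hsub v)

end CMu
end

section
/- Let (x_t, y_t, (Q_t, H_t))_{t ∈ 𝕋_n} be a cluster pattern of a 2-cycle-allowed cluster algebra with coefficients in a semifield ℙ. For each vertex t of 𝕋_n and each j ∈ {1,…,n}, define ŷ_{j,t} = y_{j,t} ∏_{i=1}^n x_{i,t}^{p_{ij,t} − p_{ji,t}}, where p_{ij,t} is the number of arrows from i to j in Q_t. Then (ŷ_t, (Q_t, H_t))_{t ∈ 𝕋_n} is a Y-pattern: for every edge t —k— t' of 𝕋_n, ŷ_{t'} is obtained from ŷ_t by the Y-mutation formula ŷ'_k = ŷ_k^{-1} and ŷ'_j = ŷ_j ŷ_k^{p_{kj}} (ŷ_k + 1)^{p_{jk} − p_{kj}} for j ≠ k, computed in the ambient field ℱ. -/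
namespace CMu

/-- The auxiliary addition of a semifield in the sense of Fomin–Zelevinsky: `(ℙ, ·)` is an
abelian group, and `⊕` is a commutative associative binary operation over which
multiplication distributes. -/
class SemifieldAdd (P : Type) [CommGroup P] where
  sadd : P → P → P
  sadd_comm : ∀ a b, sadd a b = sadd b a
  sadd_assoc : ∀ a b c, sadd (sadd a b) c = sadd a (sadd b c)
  mul_sadd : ∀ a b c, a * sadd b c = sadd (a * b) (a * c)

/-- The ambient field `ℱ = ℚℙ(x₁, …, x_n)`: the field of rational functions in `n`
variables over the fraction field `ℚℙ` of the group ring `ℤℙ`. -/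
abbrev ClusterField (P : Type) [CommGroup P] [IsDomain (MonoidAlgebra ℤ P)] (n : ℕ) :=
  FractionRing (MvPolynomial (Fin n) (FractionRing (MonoidAlgebra ℤ P)))

/-- The canonical embedding `ℙ → ℱ`. -/
noncomputable def iotaP (P : Type) [CommGroup P] [IsDomain (MonoidAlgebra ℤ P)] (n : ℕ)
    (y : P) : ClusterField P n :=
  algebraMap (MvPolynomial (Fin n) (FractionRing (MonoidAlgebra ℤ P))) _
    (MvPolynomial.C (algebraMap (MonoidAlgebra ℤ P) (FractionRing (MonoidAlgebra ℤ P))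
      (MonoidAlgebra.of ℤ P y)))

/-- The initial cluster: the free generating set `x₁, …, x_n` of `ℱ` over `ℚℙ`. -/
noncomputable def xInit (P : Type) [CommGroup P] [IsDomain (MonoidAlgebra ℤ P)] (n : ℕ)
    (i : Fin n) : ClusterField P n :=
  algebraMap (MvPolynomial (Fin n) (FractionRing (MonoidAlgebra ℤ P))) _ (MvPolynomial.X i)

/-- The coefficient mutation (`Y`-mutation) formula in direction `k`:
`y'_k = y_k⁻¹` and `y'_j = y_j y_k^{p_{kj}} (y_k ⊕ 1)^{p_{jk} − p_{kj}}` for `j ≠ k`. -/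
noncomputable def yMut {P : Type} [CommGroup P] [SemifieldAdd P] {n : ℕ}
    (Q : Quiv (Fin n)) (k : Fin n) (y : Fin n → P) : Fin n → P := fun j =>
  if j = k then (y k)⁻¹
  else y j * y k ^ Q.nArrows k j *
    SemifieldAdd.sadd (y k) 1 ^ ((Q.nArrows j k : ℤ) - (Q.nArrows k j : ℤ))

/-- The cluster exchange relation in direction `k`, in an ambient field `F` receiving the
coefficient semifield via `ι`: the mutated cluster `x'` agrees with `x` away from `k` and
`x'_k = (y_k ∏_j x_j^{p_{jk}} + ∏_j x_j^{p_{kj}}) / ((y_k ⊕ 1) x_k)`. -/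
noncomputable def XMutEq {P : Type} [CommGroup P] [SemifieldAdd P] {n : ℕ} {F : Type}
    [Field F] (ι : P → F) (Q : Quiv (Fin n)) (k : Fin n) (y : Fin n → P)
    (x x' : Fin n → F) : Prop :=
  (∀ j, j ≠ k → x' j = x j) ∧
  x' k = (ι (y k) * ∏ j, x j ^ Q.nArrows j k + ∏ j, x j ^ Q.nArrows k j) /
    (ι (SemifieldAdd.sadd (y k) 1) * x k)

/-- The element `ŷ_j = y_j ∏_i x_i^{p_{ij} − p_{ji}}` of the ambient field. -/
noncomputable def yHat {P : Type} [CommGroup P] {n : ℕ} {F : Type} [Field F]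
    (ι : P → F) (Q : Quiv (Fin n)) (x : Fin n → F) (y : Fin n → P) : Fin n → F := fun j =>
  ι (y j) * ∏ t, x t ^ ((Q.nArrows t j : ℤ) - (Q.nArrows j t : ℤ))

/-- Tropical addition on the exponent lattice: the tropical semifield `Trop(y₁,…,y_n)` is the
free abelian group `Fin n →₀ ℤ` (written additively) with `⊕` the pointwise minimum. -/
noncomputable def tmin {n : ℕ} (f g : Fin n →₀ ℤ) : Fin n →₀ ℤ :=
  Finsupp.zipWith min (min_self 0) f g

/-- The tropical `Y`-mutation of the principal coefficients, written additively. -/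
noncomputable def tropYMut {n : ℕ} (Q : Quiv (Fin n)) (k : Fin n)
    (y : Fin n → (Fin n →₀ ℤ)) : Fin n → (Fin n →₀ ℤ) := fun j =>
  if j = k then -y k
  else y j + (Q.nArrows k j : ℤ) • y k +
    ((Q.nArrows j k : ℤ) - (Q.nArrows k j : ℤ)) • tmin (y k) 0

/-- The principal coefficients along a mutation sequence, computed in the tropical
semifield `Trop(y₁,…,y_n)` (so `y_{j,t}` is a Laurent monomial, recorded by its exponents). -/
noncomputable def tropYs {n : ℕ} (Qs : ℕ → Quiv (Fin n)) (ks : ℕ → Fin n) :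
    ℕ → Fin n → (Fin n →₀ ℤ)
  | 0 => fun j => Finsupp.single j 1
  | (i + 1) => tropYMut (Qs i) (ks i) (tropYs Qs ks i)

/-- Formal subtraction-free rational expressions in variables `α`. -/
inductive SF (α : Type) : Type
  | var : α → SF α
  | one : SF α
  | add : SF α → SF α → SF α
  | mul : SF α → SF α → SF α
  | inv : SF α → SF α

namespace SF

variable {α : Type}

/-- Formal power of a subtraction-free expression. -/
def pow (e : SF α) : ℕ → SF α
  | 0 => .one
  | (m + 1) => .mul e (pow e m)

/-- Formal integer power. -/
def zpow (e : SF α) : ℤ → SF α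
  | Int.ofNat m => e.pow m
  | Int.negSucc m => .inv (e.pow (m + 1))

/-- Formal finite product. -/
def prodList : List (SF α) → SF α
  | [] => .one
  | e :: es => .mul e (prodList es)

/-- Evaluation of a subtraction-free expression in a field (with the field operations). -/
def evalField {F : Type} [Field F] (f : α → F) : SF α → F
  | .var a => f a
  | .one => 1
  | .add p q => evalField f p + evalField f q
  | .mul p q => evalField f p * evalField f q
  | .inv p => (evalField f p)⁻¹

/-- Evaluation of a subtraction-free expression in a semifield `(ℙ, ⊕, ·)` (every `+` is
interpreted as the auxiliary addition `⊕`). -/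
def evalSF {P : Type} [CommGroup P] [SemifieldAdd P] (f : α → P) : SF α → P
  | .var a => f a
  | .one => 1
  | .add p q => SemifieldAdd.sadd (evalSF f p) (evalSF f q)
  | .mul p q => evalSF f p * evalSF f q
  | .inv p => (evalSF f p)⁻¹

/-- The formal Laurent monomial `∏_j y_j^{m_j}` in the coefficient variables. -/
noncomputable def yMonomial {n : ℕ} (m : Fin n →₀ ℤ) : SF (Fin n ⊕ Fin n) :=
  SF.prodList ((List.finRange n).map fun j => (SF.var (Sum.inr j)).zpow (m j))

end SF

/-- The canonical subtraction-free expressions, in the initial cluster variables `x₁,…,x_n`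
(on the left) and coefficient variables `y₁,…,y_n` (on the right), of the
principal-coefficient cluster variables `X_{i,t}` along a mutation sequence: they are
produced by the exchange recursion, the coefficients being computed in the tropical
semifield `Trop(y₁,…,y_n)`. -/
noncomputable def sfXChain {n : ℕ} (Qs : ℕ → Quiv (Fin n)) (ks : ℕ → Fin n) :
    ℕ → Fin n → SF (Fin n ⊕ Fin n)
  | 0 => fun i => .var (Sum.inl i)
  | (i + 1) => fun j =>
    if j = ks i then
      .mul
        (.add
          (.mul (SF.yMonomial (tropYs Qs ks i (ks i)))
            (SF.prodList ((List.finRange n).map fun t =>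
              (sfXChain Qs ks i t).pow ((Qs i).nArrows t (ks i)))))
          (SF.prodList ((List.finRange n).map fun t =>
            (sfXChain Qs ks i t).pow ((Qs i).nArrows (ks i) t))))
        (.inv (.mul (SF.yMonomial (tmin (tropYs Qs ks i (ks i)) 0))
          (sfXChain Qs ks i (ks i))))
    else sfXChain Qs ks i j

/-- The hypotheses of a cluster pattern (restricted along one infinite mutation sequence
`ks`, with steps imposed below `ℓ`): an assignment of seeds
`(x_i, y_i, (Q_i, H_i))` with ambient field `ℱ = ℚℙ(x₁,…,x_n)`, the initial cluster being
the free generating set, consecutive seeds being related by seed mutation. -/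
structure IsClusterChain (P : Type) [CommGroup P] [SemifieldAdd P]
    [IsDomain (MonoidAlgebra ℤ P)] (n : ℕ) (ℓ : ℕ) (ks : ℕ → Fin n)
    (Qs : ℕ → Quiv (Fin n)) (Hs : ∀ i, HSet (Qs i))
    (xs : ℕ → Fin n → ClusterField P n) (ys : ℕ → Fin n → P) : Prop where
  loopFree : (Qs 0).LoopFree
  homotopy : IsHomotopy (Qs 0) (Hs 0)
  reduced : IsReducedH (Qs 0) (Hs 0)
  finArrow : Finite (Qs 0).Arrow
  init_x : ∀ i, xs 0 i = xInit P n i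
  quiver_step : ∀ i < ℓ, IsMutationStep (Qs i) (Hs i) (ks i) (Qs (i + 1)) (Hs (i + 1))
  x_step : ∀ i < ℓ, XMutEq (iotaP P n) (Qs i) (ks i) (ys i) (xs i) (xs (i + 1))
  y_step : ∀ i < ℓ, ys (i + 1) = yMut (Qs i) (ks i) (ys i)

end CMu

lemma Nat.card_subtype_and_const {α : Type*} (p : α → Prop) (c : Prop) [Decidable c] :
    Nat.card {a // p a ∧ c} = if c then Nat.card {a // p a} else 0 := by
  split_ifs with hc <;> simp [hc]

namespace RingCone

lemma add_ne_zero_of_right_ne_zero {R : Type*} [Ring R] {C : RingCone R} {a b : R}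
    (ha : a ∈ C) (hb : b ∈ C) (hb0 : b ≠ 0) : a + b ≠ 0 := fun h =>
  hb0 (eq_zero_of_mem_of_neg_mem hb (by rwa [← eq_neg_of_add_eq_zero_left h]))

section Coefficients

variable {R : Type*} [CommRing R] (C : RingCone R)

def monoidAlgebra (M : Type*) [CommMonoid M] : RingCone (MonoidAlgebra R M) where
  carrier := {f | ∀ m, f.coeff m ∈ C}
  zero_mem' _ := zero_mem C
  one_mem' m := by
    classical
    rw [MonoidAlgebra.one_def, MonoidAlgebra.coeff_single, Finsupp.single_apply]
    split_ifs
    exacts [one_mem C, zero_mem C]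
  add_mem' hf hg m := add_mem (hf m) (hg m)
  mul_mem' {f g} hf hg m := by
    classical
    rw [MonoidAlgebra.coeff_mul]
    refine sum_mem fun a _ => sum_mem fun b _ => ?_
    dsimp only
    split_ifs
    exacts [mul_mem (hf a) (hg b), zero_mem C]
  eq_zero_of_mem_of_neg_mem' hf hnf := by
    ext m
    exact eq_zero_of_mem_of_neg_mem (hf m) (hnf m)

def mvPolynomial (σ : Type*) : RingCone (MvPolynomial σ R) where
  carrier := {f | ∀ m, f.coeff m ∈ C}
  zero_mem' _ := zero_mem C
  one_mem' m := by
    classical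
    rw [MvPolynomial.coeff_one]
    split_ifs
    exacts [one_mem C, zero_mem C]
  add_mem' hf hg m := add_mem (hf m) (hg m)
  mul_mem' {f g} hf hg m := by
    classical
    rw [MvPolynomial.coeff_mul]
    exact sum_mem fun p _ => mul_mem (hf p.1) (hg p.2)
  eq_zero_of_mem_of_neg_mem' hf hnf := by
    ext m
    exact eq_zero_of_mem_of_neg_mem (hf m) (hnf m)

variable {C}

lemma single_mem_monoidAlgebra {M : Type*} [CommMonoid M] (m : M) {r : R} (hr : r ∈ C) :
    MonoidAlgebra.single m r ∈ C.monoidAlgebra M := by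
  classical
  intro m'
  rw [MonoidAlgebra.coeff_single, Finsupp.single_apply]
  split_ifs
  exacts [hr, zero_mem C]

lemma C_mem_mvPolynomial {σ : Type*} {r : R} (hr : r ∈ C) :
    MvPolynomial.C r ∈ C.mvPolynomial σ := by
  classical
  intro m
  rw [MvPolynomial.coeff_C]
  split_ifs
  exacts [hr, zero_mem C]

lemma X_mem_mvPolynomial {σ : Type*} (i : σ) : MvPolynomial.X i ∈ C.mvPolynomial σ := by
  classical
  intro m
  rw [MvPolynomial.coeff_X]
  split_ifs
  exacts [one_mem C, zero_mem C]

end Coefficients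

section FractionRing

variable {R : Type*} [CommRing R] [IsDomain R] (C : RingCone R)
  (K : Type*) [Field K] [Algebra R K] [IsFractionRing R K]

def fractionRing : RingCone K where
  carrier := {x | ∃ a ∈ C, ∃ b ∈ C, b ≠ 0 ∧ x = algebraMap R K a / algebraMap R K b}
  zero_mem' := ⟨0, zero_mem C, 1, one_mem C, one_ne_zero, by simp⟩
  one_mem' := ⟨1, one_mem C, 1, one_mem C, one_ne_zero, by simp⟩
  add_mem' := by
    rintro _ _ ⟨a, ha, b, hb, hb0, rfl⟩ ⟨c, hc, d, hd, hd0, rfl⟩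
    refine ⟨a * d + b * c, add_mem (mul_mem ha hd) (mul_mem hb hc), b * d, mul_mem hb hd,
      mul_ne_zero hb0 hd0, ?_⟩
    have hinj := IsFractionRing.injective R K
    rw [map_add, map_mul, map_mul, map_mul, div_add_div _ _ ((map_ne_zero_iff _ hinj).mpr hb0)
      ((map_ne_zero_iff _ hinj).mpr hd0)]
  mul_mem' := by
    rintro _ _ ⟨a, ha, b, hb, hb0, rfl⟩ ⟨c, hc, d, hd, hd0, rfl⟩
    exact ⟨a * c, mul_mem ha hc, b * d, mul_mem hb hd, mul_ne_zero hb0 hd0, by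
      simp [div_mul_div_comm]⟩
  eq_zero_of_mem_of_neg_mem' := by
    rintro x ⟨a, ha, b, hb, hb0, rfl⟩ ⟨c, hc, d, hd, hd0, hx⟩
    have hinj := IsFractionRing.injective R K
    rw [← neg_div, div_eq_div_iff ((map_ne_zero_iff _ hinj).mpr hb0)
      ((map_ne_zero_iff _ hinj).mpr hd0), ← map_neg, ← map_mul, ← map_mul] at hx
    have had : a * d = 0 := eq_zero_of_mem_of_neg_mem (mul_mem ha hd)
      (by rw [← neg_mul, hinj hx]; exact mul_mem hc hb)
    simp [(mul_eq_zero.mp had).resolve_right hd0]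

variable {C K}

lemma algebraMap_mem_fractionRing {a : R} (ha : a ∈ C) : algebraMap R K a ∈ C.fractionRing K :=
  ⟨a, ha, 1, one_mem C, one_ne_zero, by simp⟩

lemma inv_mem_fractionRing {x : K} (hx : x ∈ C.fractionRing K) : x⁻¹ ∈ C.fractionRing K := by
  obtain ⟨a, ha, b, hb, hb0, rfl⟩ := hx
  by_cases ha0 : a = 0
  · simp [ha0, zero_mem]
  · exact ⟨b, hb, a, ha, ha0, inv_div _ _⟩

end FractionRing

end RingCone

namespace CMu

variable {V : Type}

namespace Quiv

noncomputable def exchMatrix (Q : Quiv V) (i j : V) : ℤ := Q.nArrows i j - Q.nArrows j i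

/-- Away from `k` only the differences `b_{ij}` are prescribed: deleting `2`-cycles changes the
individual counts. -/
structure IsCountMutation (Q : Quiv V) (k : V) (R : Quiv V) : Prop where
  nArrows_from : ∀ t, R.nArrows k t = Q.nArrows t k
  nArrows_to : ∀ t, R.nArrows t k = Q.nArrows k t
  exchMatrix_eq : ∀ i j, i ≠ k → j ≠ k →
    R.exchMatrix i j = Q.exchMatrix i j + Q.nArrows i k * Q.nArrows k j
      - Q.nArrows j k * Q.nArrows k i

lemma nArrows_self_eq_zero {Q : Quiv V} (hQ : Q.LoopFree) (v : V) : Q.nArrows v v = 0 :=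
  @Nat.card_of_isEmpty _ ⟨fun a => hQ a.1 (a.2.1.trans a.2.2.symm)⟩

lemma exchMatrix_self (Q : Quiv V) (i : V) : Q.exchMatrix i i = 0 := sub_self _

end Quiv

section PreMut

variable (Q : Quiv V) (k : V)

instance [Finite Q.Arrow] : Finite (preMut Q k).Arrow :=
  inferInstanceAs (Finite (_ ⊕ (_ ⊕ _)))

variable {Q} in
lemma preMut_loopFree (hQ : Q.LoopFree) : (preMut Q k).LoopFree := by
  rintro (a | a | p)
  · exact hQ a.1
  · exact fun h => hQ a.1 h.symm
  · exact p.2.2.2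

open Classical in
lemma nArrows_preMut [Finite Q.Arrow] (s t : V) :
    (preMut Q k).nArrows s t =
      (if s ≠ k ∧ t ≠ k then Q.nArrows s t else 0) +
        (if s = k ∨ t = k then Q.nArrows t s else 0) +
        (if s ≠ t then Q.nArrows s k * Q.nArrows k t else 0) := by
  refine (Nat.card_congr Equiv.subtypeSum).trans ?_
  rw [Nat.card_sum, Nat.card_congr Equiv.subtypeSum, Nat.card_sum, ← add_assoc]
  simp only [Quiv.nArrows, ← Nat.card_subtype_and_const]
  congr 1; congr 1
  · exact Nat.card_congr <| (Equiv.subtypeSubtypeEquivSubtypeInter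
      (fun a : Q.Arrow => Q.src a ≠ k ∧ Q.tgt a ≠ k)
      (fun a => Q.src a = s ∧ Q.tgt a = t)).trans
      (Equiv.subtypeEquivRight fun a => by grind)
  · exact Nat.card_congr <| (Equiv.subtypeSubtypeEquivSubtypeInter
      (fun a : Q.Arrow => Q.src a = k ∨ Q.tgt a = k) (fun a => Q.tgt a = s ∧ Q.src a = t)).trans
      (Equiv.subtypeEquivRight fun a => by grind)
  · rw [mul_comm, ← Nat.card_prod, ← Nat.card_congr (Equiv.subtypeProdEquivProd
      (p := fun a : Q.Arrow => Q.src a = k ∧ Q.tgt a = t)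
      (q := fun a : Q.Arrow => Q.src a = s ∧ Q.tgt a = k)), ← Nat.card_subtype_and_const]
    exact Nat.card_congr <| (Equiv.subtypeSubtypeEquivSubtypeInter
      (fun p : Q.Arrow × Q.Arrow => Q.src p.1 = k ∧ Q.tgt p.2 = k ∧ Q.src p.2 ≠ Q.tgt p.1)
      (fun p => Q.src p.2 = s ∧ Q.tgt p.1 = t)).trans
      (Equiv.subtypeEquivRight fun a => by grind)

variable {Q k} in
lemma isCountMutation_preMut [Finite Q.Arrow] (hQ : Q.LoopFree) :
    Q.IsCountMutation k (preMut Q k) where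
  nArrows_from t := by
    by_cases h : k = t <;> simp [nArrows_preMut, h, Quiv.nArrows_self_eq_zero hQ]
  nArrows_to t := by
    by_cases h : t = k <;> simp [nArrows_preMut, h, Quiv.nArrows_self_eq_zero hQ]
  exchMatrix_eq i j hi hj := by
    by_cases h : i = j
    · subst h; simp [Quiv.exchMatrix]
    · simp [Quiv.exchMatrix, nArrows_preMut, hi, hj, h, Ne.symm h]
      ring

end PreMut

open Classical in
lemma nArrows_restrictQ_add (R : Quiv V) [Finite R.Arrow] (S : Set R.Arrow) (s t : V) :
    (restrictQ R S).nArrows s t + Nat.card {a : S // R.src a = s ∧ R.tgt a = t} =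
      R.nArrows s t := by
  let F := fun a : R.Arrow => R.src a = s ∧ R.tgt a = t
  rw [Quiv.nArrows, Quiv.nArrows,
    ← Nat.card_congr (Equiv.sumCompl fun a : Subtype F => a.1 ∉ S), Nat.card_sum]
  congr 1
  · exact Nat.card_congr <| (Equiv.subtypeSubtypeEquivSubtypeInter (· ∉ S) F).trans
      ((Equiv.subtypeEquivRight fun a => and_comm).trans
        (Equiv.subtypeSubtypeEquivSubtypeInter F (· ∉ S)).symm)
  · exact Nat.card_congr <| (Equiv.subtypeSubtypeEquivSubtypeInter (· ∈ S) F).trans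
      ((Equiv.subtypeEquivRight fun a => by rw [not_not, and_comm]).trans
        (Equiv.subtypeSubtypeEquivSubtypeInter F fun a => ¬a ∉ S).symm)

namespace TwoCycleDeletion

variable {R : Quiv V} {H : HSet R} {k : V} (D : TwoCycleDeletion R H k)

def IsPartner (a b : R.Arrow) : Prop := (a, b) ∈ D.pairs ∨ (b, a) ∈ D.pairs

variable {D}

lemma IsPartner.symm {a b : R.Arrow} (h : D.IsPartner a b) : D.IsPartner b a := Or.symm h

lemma IsPartner.unique {a b b' : R.Arrow} (h : D.IsPartner a b) (h' : D.IsPartner a b') :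
    b = b' := by
  by_contra hne
  rcases h with h | h <;> rcases h' with h' | h'
  · exact (D.disjoint _ h _ h' (by simpa using hne)).1 rfl
  · exact (D.disjoint _ h _ h' (by grind)).2.1 rfl
  · exact (D.disjoint _ h _ h' (by grind)).2.2.1 rfl
  · exact (D.disjoint _ h _ h' (by simpa using hne)).2.2.2 rfl

lemma IsPartner.tgt_eq_src {a b : R.Arrow} (h : D.IsPartner a b) :
    R.tgt a = R.src b ∧ R.tgt b = R.src a :=
  h.elim (D.endpoints _) fun h => (D.endpoints _ h).symm

lemma mem_deleted_iff {a : R.Arrow} : a ∈ D.deleted ↔ ∃ b, D.IsPartner a b := by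
  constructor
  · rintro ⟨q, hq, rfl | rfl⟩
    exacts [⟨q.2, Or.inl hq⟩, ⟨q.1, Or.inr hq⟩]
  · rintro ⟨b, h | h⟩
    exacts [⟨_, h, Or.inl rfl⟩, ⟨_, h, Or.inr rfl⟩]

lemma src_ne_of_mem_deleted {a : R.Arrow} (ha : a ∈ D.deleted) : R.src a ≠ k := by
  obtain ⟨q, hq, rfl | rfl⟩ := ha
  · exact D.src_ne_k _ hq
  · rw [← (D.endpoints _ hq).1]; exact D.tgt_ne_k _ hq

lemma tgt_ne_of_mem_deleted {a : R.Arrow} (ha : a ∈ D.deleted) : R.tgt a ≠ k := by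
  obtain ⟨q, hq, rfl | rfl⟩ := ha
  · exact D.tgt_ne_k _ hq
  · rw [(D.endpoints _ hq).2]; exact D.src_ne_k _ hq

variable (D)

noncomputable def partner (a : D.deleted) : D.deleted :=
  ⟨_, mem_deleted_iff.2 ⟨a, (mem_deleted_iff.1 a.2).choose_spec.symm⟩⟩

lemma isPartner_partner (a : D.deleted) : D.IsPartner a (D.partner a) :=
  (mem_deleted_iff.1 a.2).choose_spec

lemma partner_involutive : Function.Involutive D.partner := fun a =>
  Subtype.ext ((D.isPartner_partner _).unique (D.isPartner_partner a).symm)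

lemma card_deleted_fiber_comm (s t : V) :
    Nat.card {a : D.deleted // R.src a = s ∧ R.tgt a = t} =
      Nat.card {a : D.deleted // R.src a = t ∧ R.tgt a = s} :=
  Nat.card_congr <| D.partner_involutive.toPerm.subtypeEquiv fun a => by
    obtain ⟨h₁, h₂⟩ := (D.isPartner_partner a).tgt_eq_src
    simp only [Function.Involutive.coe_toPerm, ← h₁, ← h₂, and_comm]

end TwoCycleDeletion

namespace Quiv.IsCountMutation

variable {Q R R' : Quiv V} {k : V}

lemma restrictQ_deleted {H : HSet R} (h : Q.IsCountMutation k R) [Finite R.Arrow]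
    (D : TwoCycleDeletion R H k) : Q.IsCountMutation k (restrictQ R D.deleted) where
  nArrows_from t := by
    have := nArrows_restrictQ_add R D.deleted k t
    rw [@Nat.card_of_isEmpty _ ⟨fun a => D.src_ne_of_mem_deleted a.1.2 a.2.1⟩] at this
    rw [← h.nArrows_from, ← this, add_zero]
  nArrows_to t := by
    have := nArrows_restrictQ_add R D.deleted t k
    rw [@Nat.card_of_isEmpty _ ⟨fun a => D.tgt_ne_of_mem_deleted a.1.2 a.2.2⟩] at this
    rw [← h.nArrows_to, ← this, add_zero]
  exchMatrix_eq i j hi hj := by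
    have hij := nArrows_restrictQ_add R D.deleted i j
    have hji := nArrows_restrictQ_add R D.deleted j i
    rw [D.card_deleted_fiber_comm] at hij
    rw [← h.exchMatrix_eq i j hi hj, exchMatrix, exchMatrix, ← hij, ← hji]
    push_cast
    ring

lemma of_qIso (h : Q.IsCountMutation k R) (f : QIso R R') : Q.IsCountMutation k R' := by
  have hf (s t : V) : R'.nArrows s t = R.nArrows s t :=
    (Nat.card_congr (f.arr.subtypeEquiv fun a => by rw [f.src_eq, f.tgt_eq])).symm
  exact ⟨fun t => (hf _ _).trans (h.1 t), fun t => (hf _ _).trans (h.2 t),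
    fun i j hi hj => by rw [exchMatrix, hf, hf, ← h.3 i j hi hj, exchMatrix]⟩

end Quiv.IsCountMutation

lemma QIso.loopFree {Q R : Quiv V} (f : QIso Q R) (hQ : Q.LoopFree) : R.LoopFree := by
  intro b hb
  apply hQ (f.arr.symm b)
  rw [← f.src_eq, ← f.tgt_eq, f.arr.apply_symm_apply, hb]

namespace IsMutationStep

variable {Q R : Quiv V} {H : HSet Q} {K : HSet R} {k : V}

lemma isCountMutation [Finite Q.Arrow] (hQ : Q.LoopFree) (h : IsMutationStep Q H k R K) :
    Q.IsCountMutation k R := by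
  obtain ⟨D, -, f, -⟩ := h
  have : Finite (mutQuiv Q H k D).Arrow := Subtype.finite
  exact ((isCountMutation_preMut hQ).restrictQ_deleted D).of_qIso f

lemma loopFree (hQ : Q.LoopFree) (h : IsMutationStep Q H k R K) : R.LoopFree := by
  obtain ⟨D, -, f, -⟩ := h
  exact f.loopFree fun a => preMut_loopFree k hQ a.1

lemma finite [Finite Q.Arrow] (h : IsMutationStep Q H k R K) : Finite R.Arrow := by
  obtain ⟨D, -, f, -⟩ := h
  have : Finite (mutQuiv Q H k D).Arrow := Subtype.finite
  exact Finite.of_equiv _ f.arr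

end IsMutationStep

section LaurentMonomial

variable {ι F : Type*} [Fintype ι] [Field F] {x : ι → F}

lemma prod_zpow_add (hx : ∀ t, x t ≠ 0) (e f : ι → ℤ) :
    ∏ t, x t ^ (e t + f t) = (∏ t, x t ^ e t) * ∏ t, x t ^ f t := by
  rw [← Finset.prod_mul_distrib]
  exact Finset.prod_congr rfl fun t _ => zpow_add₀ (hx t) _ _

lemma prod_zpow_neg (e : ι → ℤ) : ∏ t, x t ^ (-e t) = (∏ t, x t ^ e t)⁻¹ := by
  simp only [zpow_neg, Finset.prod_inv_distrib]

lemma prod_zpow_zpow (e : ι → ℤ) (z : ℤ) :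
    (∏ t, x t ^ e t) ^ z = ∏ t, x t ^ (e t * z) := by
  simp only [← Finset.prod_zpow, zpow_mul]

lemma prod_zpow_eq_of_forall_ne [DecidableEq ι] {x' : ι → F} {e e' : ι → ℤ} {k : ι}
    (hx : x k ≠ 0)
    (hx' : ∀ t, t ≠ k → x' t = x t) (he : ∀ t, t ≠ k → e' t = e t) :
    ∏ t, x' t ^ e' t = x' k ^ e' k * x k ^ (-e k) * ∏ t, x t ^ e t := by
  rw [← Finset.mul_prod_erase _ _ (Finset.mem_univ k),
    ← Finset.mul_prod_erase _ (fun t => x t ^ e t) (Finset.mem_univ k),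
    Finset.prod_congr rfl fun t ht => by
      rw [hx' t (Finset.ne_of_mem_erase ht), he t (Finset.ne_of_mem_erase ht)],
    zpow_neg]
  field_simp

end LaurentMonomial

section YHat

lemma yHat_eq {P F : Type} [CommGroup P] [Field F] {n : ℕ} (ι : P → F) (Q : Quiv (Fin n))
    (x : Fin n → F) (y : Fin n → P) (j : Fin n) :
    yHat ι Q x y j = ι (y j) * ∏ t, x t ^ Q.exchMatrix t j := rfl

variable {P F : Type} [CommGroup P] [SemifieldAdd P] [Field F] {n : ℕ} {ι : P →* F}
  {Q R : Quiv (Fin n)} {k : Fin n} {y : Fin n → P} {x x' : Fin n → F}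

lemma yHat_yMut_self (hx : ∀ t, x t ≠ 0) (hQR : Q.IsCountMutation k R)
    (hxx' : XMutEq ι Q k y x x') :
    yHat ι R x' (yMut Q k y) k = (yHat ι Q x y k)⁻¹ := by
  have hexch : ∀ t, R.exchMatrix t k = -Q.exchMatrix t k := fun t => by
    rw [Quiv.exchMatrix, Quiv.exchMatrix, hQR.nArrows_to, hQR.nArrows_from, neg_sub]
  rw [yHat_eq, yHat_eq, prod_zpow_eq_of_forall_ne (hx k) hxx'.1 (e := fun t => -Q.exchMatrix t k)
    fun t _ => hexch t, hexch, Quiv.exchMatrix_self, prod_zpow_neg]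
  simp [yMut, mul_comm]

lemma yHat_yMut_of_ne (hx : ∀ t, x t ≠ 0) (hkk : Q.nArrows k k = 0)
    (hQR : Q.IsCountMutation k R) (hxx' : XMutEq ι Q k y x x') {j : Fin n} (hj : j ≠ k) :
    yHat ι R x' (yMut Q k y) j =
      yHat ι Q x y j * (yHat ι Q x y k) ^ (Q.nArrows k j) *
        (yHat ι Q x y k + 1) ^ ((Q.nArrows j k : ℤ) - (Q.nArrows k j : ℤ)) := by
  obtain ⟨hx'ne, hx'k⟩ := hxx'
  generalize hN : ι (y k) * ∏ t, x t ^ Q.nArrows t k + ∏ t, x t ^ Q.nArrows k t = N at hx'k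
  generalize hz : (Q.nArrows j k : ℤ) - Q.nArrows k j = z
  have hM : ∏ t, x t ^ Q.nArrows k t ≠ 0 :=
    Finset.prod_ne_zero_iff.2 fun t _ => pow_ne_zero _ (hx t)
  have hbk : ∏ t, x t ^ Q.exchMatrix t k =
      (∏ t, x t ^ Q.nArrows t k) / ∏ t, x t ^ Q.nArrows k t := by
    simp_rw [Quiv.exchMatrix, sub_eq_add_neg]
    rw [prod_zpow_add hx, prod_zpow_neg, div_eq_mul_inv]
    simp
  have hyk1 : yHat ι Q x y k + 1 = N / ∏ t, x t ^ Q.nArrows k t := by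
    rw [yHat_eq, hbk, ← hN]
    field_simp
  -- the exponent of `x_t` in `ŷ'_j`, regrouped as in `ŷ_j ŷ_k ^ p_{kj} M₋ ^ (-z)`
  have hexp : ∀ t,
      Q.exchMatrix t j + Q.nArrows t k * Q.nArrows k j - Q.nArrows j k * Q.nArrows k t =
        Q.exchMatrix t j + Q.exchMatrix t k * Q.nArrows k j + -(Q.nArrows k t * z) := fun t => by
    simp only [← hz, Quiv.exchMatrix]; ring
  have hxk : x' k ^ R.exchMatrix k j *
      x k ^ (-(Q.exchMatrix k j + Q.nArrows k k * Q.nArrows k j - Q.nArrows j k * Q.nArrows k k)) =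
      (N / ι (SemifieldAdd.sadd (y k) 1)) ^ z := by
    simp only [hkk, Quiv.exchMatrix, hQR.nArrows_from, hQR.nArrows_to, hx'k, ← div_div,
      div_zpow, Nat.cast_zero, zero_mul, mul_zero, add_zero, sub_zero, neg_sub, hz]
    exact div_mul_cancel₀ _ (zpow_ne_zero _ (hx k))
  rw [yHat_eq, prod_zpow_eq_of_forall_ne (hx k) hx'ne fun t ht => hQR.exchMatrix_eq t j ht hj, hxk]
  simp_rw [hexp]
  rw [prod_zpow_add hx, prod_zpow_add hx, ← prod_zpow_zpow, prod_zpow_neg, ← prod_zpow_zpow,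
    hyk1, yHat_eq, yHat_eq, hbk]
  simp only [yMut, if_neg hj, map_mul, map_pow, map_zpow, zpow_natCast, hz]
  have hs : ι (SemifieldAdd.sadd (y k) 1) ^ z ≠ 0 :=
    zpow_ne_zero _ (ι.toHomUnits (SemifieldAdd.sadd (y k) 1)).ne_zero
  rw [div_zpow, div_zpow, mul_pow]
  field_simp

end YHat

lemma XMutEq.mem_cone {P F : Type} [CommGroup P] [SemifieldAdd P] [Field F] {n : ℕ}
    {ι : P →* F} {C : RingCone F} (hι : ∀ p, ι p ∈ C) (hC : ∀ a ∈ C, a⁻¹ ∈ C)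
    {Q : Quiv (Fin n)} {k : Fin n} {y : Fin n → P} {x x' : Fin n → F}
    (hx : ∀ t, x t ∈ C ∧ x t ≠ 0) (h : XMutEq ι Q k y x x') (t : Fin n) :
    x' t ∈ C ∧ x' t ≠ 0 := by
  obtain ⟨hne, hk⟩ := h
  by_cases htk : t = k
  · subst htk
    have hM (m : Fin n → ℕ) : ∏ t, x t ^ m t ∈ C ∧ ∏ t, x t ^ m t ≠ 0 :=
      ⟨prod_mem fun t _ => pow_mem (hx t).1 _,
        Finset.prod_ne_zero_iff.2 fun t _ => pow_ne_zero _ (hx t).2⟩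
    have hyM := mul_mem (hι (y t)) (hM fun j => Q.nArrows j t).1
    rw [hk, div_eq_mul_inv]
    exact ⟨mul_mem (add_mem hyM (hM _).1) (hC _ (mul_mem (hι _) (hx t).1)),
      mul_ne_zero (RingCone.add_ne_zero_of_right_ne_zero hyM (hM _).1 (hM _).2)
        (inv_ne_zero (mul_ne_zero (ι.toHomUnits _).ne_zero (hx t).2))⟩
  · rw [hne t htk]
    exact hx t

section ClusterField

variable (P : Type) [CommGroup P] [IsDomain (MonoidAlgebra ℤ P)] (n : ℕ)

noncomputable def clusterCone : RingCone (ClusterField P n) :=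
  ((((RingCone.nonneg ℤ).monoidAlgebra P).fractionRing
    (FractionRing (MonoidAlgebra ℤ P))).mvPolynomial (Fin n)).fractionRing (ClusterField P n)

noncomputable def iotaMonoidHom : P →* ClusterField P n :=
  (algebraMap (MvPolynomial (Fin n) (FractionRing (MonoidAlgebra ℤ P))) _).toMonoidHom.comp
    ((MvPolynomial.C.toMonoidHom.comp (algebraMap _ _).toMonoidHom).comp (MonoidAlgebra.of ℤ P))

lemma coe_iotaMonoidHom : ⇑(iotaMonoidHom P n) = iotaP P n := rfl

variable {P n}

lemma iotaP_mem_clusterCone (p : P) : iotaP P n p ∈ clusterCone P n :=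
  RingCone.algebraMap_mem_fractionRing <| RingCone.C_mem_mvPolynomial <|
    RingCone.algebraMap_mem_fractionRing <|
      RingCone.single_mem_monoidAlgebra p (RingCone.mem_nonneg.2 zero_le_one)

lemma xInit_mem_clusterCone (i : Fin n) : xInit P n i ∈ clusterCone P n :=
  RingCone.algebraMap_mem_fractionRing (RingCone.X_mem_mvPolynomial i)

lemma xInit_ne_zero (i : Fin n) : xInit P n i ≠ 0 :=
  (map_ne_zero_iff _ (IsFractionRing.injective _ _)).2 (MvPolynomial.X_ne_zero i)

end ClusterField

lemma IsClusterChain.loopFree_finite_mem_cone {P : Type} [CommGroup P] [SemifieldAdd P]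
    [IsDomain (MonoidAlgebra ℤ P)] {n ℓ : ℕ} {ks : ℕ → Fin n} {Qs : ℕ → Quiv (Fin n)}
    {Hs : ∀ i, HSet (Qs i)} {xs : ℕ → Fin n → ClusterField P n} {ys : ℕ → Fin n → P}
    (hchain : IsClusterChain P n ℓ ks Qs Hs xs ys) :
    ∀ i ≤ ℓ, (Qs i).LoopFree ∧ Finite (Qs i).Arrow ∧
      ∀ t, xs i t ∈ clusterCone P n ∧ xs i t ≠ 0
  | 0, _ => ⟨hchain.loopFree, hchain.finArrow, fun t => by
      rw [hchain.init_x]; exact ⟨xInit_mem_clusterCone t, xInit_ne_zero t⟩⟩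
  | i + 1, hi => by
    obtain ⟨hQ, hfin, hx⟩ := hchain.loopFree_finite_mem_cone i (by omega)
    have hstep := hchain.quiver_step i hi
    exact ⟨hstep.loopFree hQ, hstep.finite,
      XMutEq.mem_cone (ι := iotaMonoidHom P n) iotaP_mem_clusterCone
        (fun _ => RingCone.inv_mem_fractionRing) hx (hchain.x_step i hi)⟩

/-- **From cluster patterns to `Y`-patterns** (the analogue of [FZIV, Prop. 3.9]; Lemma
`lemma: y hat`).  Let `(x_t, y_t, (Q_t, H_t))` be a cluster pattern of a 2-cycle-allowed
cluster algebra with coefficients in a semifield `ℙ` (along an arbitrary mutation sequence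
`ks` in the regular tree).  For each `t` and `j` set
`ŷ_{j,t} = y_{j,t} ∏_i x_{i,t}^{p_{ij,t} − p_{ji,t}}` in the ambient field `ℱ`.
Then `(ŷ_t, (Q_t, H_t))` is a `Y`-pattern: for every edge `t —k— t'`,
`ŷ_{k,t'} = ŷ_{k,t}⁻¹` and
`ŷ_{j,t'} = ŷ_{j,t} ŷ_{k,t}^{p_{kj}} (ŷ_{k,t} + 1)^{p_{jk} − p_{kj}}` for `j ≠ k`,
computed with the ordinary field operations of `ℱ`. -/
theorem yHat_is_Y_pattern (P : Type) [CommGroup P] [SemifieldAdd P]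
    [IsDomain (MonoidAlgebra ℤ P)] (n ℓ : ℕ) (ks : ℕ → Fin n)
    (Qs : ℕ → Quiv (Fin n)) (Hs : ∀ i, HSet (Qs i))
    (xs : ℕ → Fin n → ClusterField P n) (ys : ℕ → Fin n → P)
    (hchain : IsClusterChain P n ℓ ks Qs Hs xs ys) :
    ∀ i < ℓ,
      yHat (iotaP P n) (Qs (i + 1)) (xs (i + 1)) (ys (i + 1)) (ks i) =
        (yHat (iotaP P n) (Qs i) (xs i) (ys i) (ks i))⁻¹ ∧
      ∀ j, j ≠ ks i →
        yHat (iotaP P n) (Qs (i + 1)) (xs (i + 1)) (ys (i + 1)) j =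
          yHat (iotaP P n) (Qs i) (xs i) (ys i) j *
            (yHat (iotaP P n) (Qs i) (xs i) (ys i) (ks i)) ^ ((Qs i).nArrows (ks i) j) *
            (yHat (iotaP P n) (Qs i) (xs i) (ys i) (ks i) + 1) ^
              (((Qs i).nArrows j (ks i) : ℤ) - ((Qs i).nArrows (ks i) j : ℤ)) := by
  intro i hi
  obtain ⟨hQ, hfin, hx⟩ := hchain.loopFree_finite_mem_cone i hi.le
  have hcount := (hchain.quiver_step i hi).isCountMutation hQ
  have hX : XMutEq (iotaMonoidHom P n) (Qs i) (ks i) (ys i) (xs i) (xs (i + 1)) :=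
    hchain.x_step i hi
  have hx0 (t : Fin n) : xs i t ≠ 0 := (hx t).2
  rw [hchain.y_step i hi, ← coe_iotaMonoidHom]
  exact ⟨yHat_yMut_self hx0 hcount hX, fun j hj =>
    yHat_yMut_of_ne hx0 (Quiv.nArrows_self_eq_zero hQ _) hcount hX hj⟩

end CMu
end
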